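/- arXiv:2103.07926 — 7 statements merged into one kernel-verified Lean document; each statement's English description precedes it below -/
import Mathlib

section
/- Let F be a germ of biholomorphism of (ℂⁿ, 0). The following are equivalent: (a) F has the finite orbits property; (b) Fᵐ has the finite orbits property for all m ∈ ℕ; (c) Fᵐ has the finite orbits property for some m ∈ ℕ, m ≥ 1. -/
open Topology Filter

/-- The orbit of `p` by `F` (with inverse `Finv`) inside `A`: all forward and backward
iterates of `p` whose intermediate iterates stay in `A`. -/
def orbitIn {n : ℕ} (F Finv : (Fin n → ℂ) → (Fin n → ℂ)) (A : Set (Fin n → ℂ))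
    (p : Fin n → ℂ) : Set (Fin n → ℂ) :=
  {q | ∃ j : ℕ, q = F^[j] p ∧ ∀ k ≤ j, F^[k] p ∈ A} ∪
  {q | ∃ j : ℕ, q = Finv^[j] p ∧ ∀ k ≤ j, Finv^[k] p ∈ A}

/-- `F` has finite orbits in `A`. -/
def FiniteOrbitsIn {n : ℕ} (F Finv : (Fin n → ℂ) → (Fin n → ℂ)) (A : Set (Fin n → ℂ)) : Prop :=
  ∀ p ∈ A, (orbitIn F Finv A p).Finite

/-- The finite orbits property: there is a neighborhood of `0` in which all orbits are finite. -/
def HasFiniteOrbits {n : ℕ} (F Finv : (Fin n → ℂ) → (Fin n → ℂ)) : Prop :=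
  ∃ A ∈ 𝓝 (0 : Fin n → ℂ), FiniteOrbitsIn F Finv A

/-- `F` (with local inverse `Finv`) represents a germ of biholomorphism of `(ℂⁿ, 0)`. -/
def IsLocalBiholoAt {n : ℕ} (F Finv : (Fin n → ℂ) → (Fin n → ℂ)) : Prop :=
  AnalyticAt ℂ F 0 ∧ F 0 = 0 ∧ AnalyticAt ℂ Finv 0 ∧ Finv 0 = 0 ∧
    (∀ᶠ x in 𝓝 (0 : Fin n → ℂ), Finv (F x) = x) ∧
    (∀ᶠ x in 𝓝 (0 : Fin n → ℂ), F (Finv x) = x)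

section Aux

variable {n : ℕ}

/-- Iterates of a map continuous at a fixed point `0` are continuous at `0`. -/
lemma iterContAt {f : (Fin n → ℂ) → (Fin n → ℂ)} (hc : ContinuousAt f 0)
    (h0 : f 0 = 0) (r : ℕ) : ContinuousAt (f^[r]) 0 := by
  induction r with
  | zero => simpa using continuousAt_id
  | succ r ih =>
    rw [Function.iterate_succ]
    exact ContinuousAt.comp (by rwa [h0]) hc

/-- The forward half of an orbit. -/
def fwdOrbit (f : (Fin n → ℂ) → (Fin n → ℂ)) (A : Set (Fin n → ℂ)) (p : Fin n → ℂ) :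
    Set (Fin n → ℂ) := {q | ∃ j : ℕ, q = f^[j] p ∧ ∀ k ≤ j, f^[k] p ∈ A}

lemma fwd_iter_subset {f : (Fin n → ℂ) → (Fin n → ℂ)} {A A' : Set (Fin n → ℂ)} {m : ℕ}
    (hm : 1 ≤ m) (hA' : ∀ x ∈ A', ∀ r < m, f^[r] x ∈ A) (p : Fin n → ℂ) :
    fwdOrbit (f^[m]) A' p ⊆ fwdOrbit f A p := by
  rintro q ⟨j, rfl, hj⟩
  refine ⟨m * j, by rw [Function.iterate_mul], fun k hk => ?_⟩
  have hk' : k / m ≤ j := by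
    have h : k / m ≤ m * j / m := Nat.div_le_div_right hk
    rwa [Nat.mul_div_cancel_left _ hm] at h
  have h1 : (f^[m])^[k / m] p ∈ A' := hj _ hk'
  have h2 := hA' _ h1 (k % m) (Nat.mod_lt _ hm)
  rwa [← Function.iterate_mul, ← Function.iterate_add_apply, Nat.mod_add_div] at h2

lemma fwd_subset_iUnion {f : (Fin n → ℂ) → (Fin n → ℂ)} {A A' : Set (Fin n → ℂ)} {m : ℕ}
    (hm : 1 ≤ m) (hA' : ∀ x ∈ A', ∀ r < m, f^[r] x ∈ A) (p : Fin n → ℂ) :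
    fwdOrbit f A' p ⊆ ⋃ r ∈ Finset.range m, f^[r] '' fwdOrbit (f^[m]) A p := by
  rintro q ⟨j, rfl, hj⟩
  refine Set.mem_biUnion (Finset.mem_range.mpr (Nat.mod_lt j hm)) ?_
  refine ⟨(f^[m])^[j / m] p, ⟨j / m, rfl, fun k hk => ?_⟩, ?_⟩
  · have h1 : m * k ≤ j := by
      calc m * k ≤ m * (j / m) := Nat.mul_le_mul_left m hk
        _ ≤ j := by rw [mul_comm]; exact Nat.div_mul_le_self j m
    have h2 := hA' _ (hj (m * k) h1) 0 hm
    simpa [Function.iterate_mul] using h2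
  · rw [← Function.iterate_mul, ← Function.iterate_add_apply, Nat.mod_add_div]

variable {F Finv : (Fin n → ℂ) → (Fin n → ℂ)}

/-- The shrunk neighborhood is a neighborhood. -/
lemma shrink_mem_nhds (hc : ContinuousAt F 0) (h0 : F 0 = 0)
    (hc' : ContinuousAt Finv 0) (h0' : Finv 0 = 0) {A : Set (Fin n → ℂ)} (hA : A ∈ 𝓝 0)
    (m : ℕ) :
    {x : Fin n → ℂ | ∀ r ∈ Finset.range m, F^[r] x ∈ A ∧ Finv^[r] x ∈ A} ∈ 𝓝 0 := by
  have h : ∀ᶠ x in 𝓝 (0 : Fin n → ℂ), ∀ r ∈ Finset.range m,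
      F^[r] x ∈ A ∧ Finv^[r] x ∈ A := by
    rw [Filter.eventually_all_finset]
    intro r _
    have h1 := (iterContAt hc h0 r).preimage_mem_nhds
      (by rwa [Function.iterate_fixed h0] : A ∈ 𝓝 (F^[r] 0))
    have h2 := (iterContAt hc' h0' r).preimage_mem_nhds
      (by rwa [Function.iterate_fixed h0'] : A ∈ 𝓝 (Finv^[r] 0))
    filter_upwards [h1, h2] with x hx1 hx2
    exact ⟨hx1, hx2⟩
  exact h

lemma key1 (hc : ContinuousAt F 0) (h0 : F 0 = 0)
    (hc' : ContinuousAt Finv 0) (h0' : Finv 0 = 0) {m : ℕ} (hm : 1 ≤ m)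
    (h : HasFiniteOrbits F Finv) : HasFiniteOrbits (F^[m]) (Finv^[m]) := by
  obtain ⟨A, hA, hfin⟩ := h
  set A' : Set (Fin n → ℂ) := {x | ∀ r ∈ Finset.range m, F^[r] x ∈ A ∧ Finv^[r] x ∈ A} with hA'def
  refine ⟨A', shrink_mem_nhds hc h0 hc' h0' hA m, fun p hp => ?_⟩
  have hpA : p ∈ A := by simpa using (hp 0 (Finset.mem_range.mpr hm)).1
  have hsub : orbitIn (F^[m]) (Finv^[m]) A' p ⊆ orbitIn F Finv A p :=
    Set.union_subset_union
      (fwd_iter_subset hm (fun x hx r hr => (hx r (Finset.mem_range.mpr hr)).1) p)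
      (fwd_iter_subset hm (fun x hx r hr => (hx r (Finset.mem_range.mpr hr)).2) p)
  exact (hfin p hpA).subset hsub

lemma key2 (hc : ContinuousAt F 0) (h0 : F 0 = 0)
    (hc' : ContinuousAt Finv 0) (h0' : Finv 0 = 0) {m : ℕ} (hm : 1 ≤ m)
    (h : HasFiniteOrbits (F^[m]) (Finv^[m])) : HasFiniteOrbits F Finv := by
  obtain ⟨A, hA, hfin⟩ := h
  set A' : Set (Fin n → ℂ) := {x | ∀ r ∈ Finset.range m, F^[r] x ∈ A ∧ Finv^[r] x ∈ A} with hA'def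
  refine ⟨A', shrink_mem_nhds hc h0 hc' h0' hA m, fun p hp => ?_⟩
  have hpA : p ∈ A := by simpa using (hp 0 (Finset.mem_range.mpr hm)).1
  have hfinp := hfin p hpA
  have hf1 : (fwdOrbit (F^[m]) A p).Finite := hfinp.subset Set.subset_union_left
  have hf2 : (fwdOrbit (Finv^[m]) A p).Finite := hfinp.subset Set.subset_union_right
  have hsub : orbitIn F Finv A' p ⊆
      (⋃ r ∈ Finset.range m, F^[r] '' fwdOrbit (F^[m]) A p) ∪
      (⋃ r ∈ Finset.range m, Finv^[r] '' fwdOrbit (Finv^[m]) A p) :=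
    Set.union_subset_union
      (fwd_subset_iUnion hm (fun x hx r hr => (hx r (Finset.mem_range.mpr hr)).1) p)
      (fwd_subset_iUnion hm (fun x hx r hr => (hx r (Finset.mem_range.mpr hr)).2) p)
  refine Set.Finite.subset (Set.Finite.union ?_ ?_) hsub
  · exact Set.Finite.biUnion (Finset.range m).finite_toSet fun r _ => hf1.image _
  · exact Set.Finite.biUnion (Finset.range m).finite_toSet fun r _ => hf2.image _

end Aux

/-- Invariance of the finite orbits property under iteration. -/
theorem hasFiniteOrbits_iterate {n : ℕ} (F Finv : (Fin n → ℂ) → (Fin n → ℂ))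
    (hF : IsLocalBiholoAt F Finv) :
    (HasFiniteOrbits F Finv ↔ ∀ m : ℕ, 1 ≤ m → HasFiniteOrbits (F^[m]) (Finv^[m])) ∧
    (HasFiniteOrbits F Finv ↔ ∃ m : ℕ, 1 ≤ m ∧ HasFiniteOrbits (F^[m]) (Finv^[m])) := by
  obtain ⟨hFa, hF0, hGa, hG0, -, -⟩ := hF
  have hc := hFa.continuousAt
  have hc' := hGa.continuousAt
  constructor
  · constructor
    · intro h m hm
      exact key1 hc hF0 hc' hG0 hm h
    · intro h
      have h1 := h 1 le_rfl
      simpa using h1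
  · constructor
    · intro h
      exact ⟨1, le_rfl, by simpa using h⟩
    · rintro ⟨m, hm, h⟩
      exact key2 hc hF0 hc' hG0 hm h
end

section
/- Let A ∈ GL(n, ℂ) be a matrix all of whose eigenvalues are roots of unity. Then the linear map F(x) = Ax has the finite orbits property: for every bounded neighborhood B of 0 and every p ∈ B, the orbit of p by F in B is finite. -/
/-! The spectrum of `A` is a finite set of roots of unity, so by spectral mapping some power
`A ^ K` has spectrum `{1}` and `A ^ K - 1` is nilpotent; the same holds for `A⁻¹`. For a unipotent
`U = 1 + N` and a point `p` with `N p ≠ 0`, let `N q`, with `q = N ^ k p`, be the last nonzero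
vector of the chain `N ^ j (N p)`. Since `N ^ 2 q = 0`, we get `N ^ k (U ^ m p) = q + m • N q`, so
the iterates `U ^ m p` are unbounded. Hence every point is either `K`-periodic under `A` or its
forward orbit leaves the bounded set `B`, and either way only finitely many iterates are visited
before leaving `B`. -/

open Topology Filter

open Polynomial Bornology Set Function

theorem Matrix.isNilpotent_of_spectrum_subset_zero {K n : Type*} [Field K] [IsAlgClosed K]
    [Fintype n] [DecidableEq n] (N : Matrix n n K) (h : spectrum K N ⊆ {0}) : IsNilpotent N := by
  have hroots : N.charpoly.roots = Multiset.replicate (Fintype.card n) 0 := by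
    refine Multiset.eq_replicate.mpr ⟨?_, fun μ hμ => ?_⟩
    · rw [IsAlgClosed.card_roots_eq_natDegree, N.charpoly_natDegree_eq_dim]
    · exact h (mem_spectrum_iff_isRoot_charpoly.mpr (isRoot_of_mem_roots hμ))
  have hcharpoly : N.charpoly = X ^ Fintype.card n := by
    rw [(IsAlgClosed.splits _).eq_prod_roots_of_monic N.charpoly_monic, hroots]
    simp
  exact ⟨Fintype.card n, by simpa [hcharpoly] using N.aeval_self_charpoly⟩

theorem Set.Finite.exists_pos_pow_eq_one {M : Type*} [Monoid M] {s : Set M} (hs : s.Finite)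
    (h : ∀ x ∈ s, ∃ k, 1 ≤ k ∧ x ^ k = 1) : ∃ K, 0 < K ∧ ∀ x ∈ s, x ^ K = 1 := by
  have hfin : ∀ x ∈ s, IsOfFinOrder x := fun x hx =>
    isOfFinOrder_iff_pow_eq_one.mpr (h x hx)
  refine ⟨∏ x ∈ hs.toFinset, orderOf x,
    Finset.prod_pos fun x hx => (hfin x (hs.mem_toFinset.mp hx)).orderOf_pos, fun x hx => ?_⟩
  exact orderOf_dvd_iff_pow_eq_one.mp (Finset.dvd_prod_of_mem _ (hs.mem_toFinset.mpr hx))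

theorem Matrix.exists_isNilpotent_pow_sub_one {K n : Type*} [Field K] [IsAlgClosed K]
    [Fintype n] [DecidableEq n] (A : Matrix n n K)
    (h : ∀ μ ∈ spectrum K A, ∃ k, 1 ≤ k ∧ μ ^ k = 1) :
    ∃ k, 0 < k ∧ IsNilpotent (A ^ k - 1) := by
  obtain ⟨k, hk, hpow⟩ := A.finite_spectrum.exists_pos_pow_eq_one h
  refine ⟨k, hk, isNilpotent_of_spectrum_subset_zero _ ?_⟩
  have hdeg : 0 < degree (X ^ k - C (1 : K)) := by
    rw [degree_X_pow_sub_C hk]; exact_mod_cast hk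
  have := spectrum.map_polynomial_aeval_of_degree_pos A _ hdeg
  simp only [map_sub, map_pow, aeval_X, map_one] at this
  rw [this]
  rintro _ ⟨μ, hμ, rfl⟩
  simp [hpow μ hμ]

theorem Matrix.spectrum_nonsing_inv {K n : Type*} [Field K] [Fintype n] [DecidableEq n]
    (A : Matrix n n K) (hA : IsUnit A.det) : spectrum K A⁻¹ = (spectrum K A)⁻¹ := by
  lift A to (Matrix n n K)ˣ using (A.isUnit_iff_isUnit_det.mpr hA)
  rw [nonsing_inv_eq_ringInverse, Ring.inverse_unit, spectrum.map_inv]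

def forwardOrbitIn {α : Type*} (F : α → α) (s : Set α) (p : α) : Set α :=
  {q | ∃ j : ℕ, q = F^[j] p ∧ ∀ k ≤ j, F^[k] p ∈ s}

section
variable {α : Type*} {F : α → α} {s : Set α} {p : α}

theorem Function.IsPeriodicPt.finite_forwardOrbitIn {K : ℕ} (hp : IsPeriodicPt F K p)
    (hK : 0 < K) : (forwardOrbitIn F s p).Finite := by
  refine ((finite_Iio K).image fun j => F^[j] p).subset ?_
  rintro _ ⟨j, rfl, -⟩
  exact ⟨j % K, Nat.mod_lt j hK, hp.iterate_mod_apply j⟩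

theorem finite_forwardOrbitIn_of_iterate_notMem {N : ℕ} (hN : F^[N] p ∉ s) :
    (forwardOrbitIn F s p).Finite := by
  refine ((finite_Iio N).image fun j => F^[j] p).subset ?_
  rintro _ ⟨j, rfl, hj⟩
  exact ⟨j, lt_of_not_ge fun hNj => hN (hj N hNj), rfl⟩

end

theorem Module.End.exists_pow_apply_ne_zero_and_apply_eq_zero {R M : Type*} [Semiring R]
    [AddCommMonoid M] [Module R M] {N : Module.End R M} (hN : IsNilpotent N) {v : M}
    (hv : v ≠ 0) : ∃ k, (N ^ k) v ≠ 0 ∧ N ((N ^ k) v) = 0 := by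
  classical
  obtain ⟨e, he⟩ := hN
  have hex : ∃ k, (N ^ (k + 1)) v = 0 :=
    ⟨e, by rw [pow_succ, he, zero_mul, LinearMap.zero_apply]⟩
  refine ⟨Nat.find hex, ?_, by simpa [pow_succ'] using Nat.find_spec hex⟩
  rcases hk : Nat.find hex with _ | j
  · simpa using hv
  · exact Nat.find_min hex (hk ▸ j.lt_succ_self)

theorem Module.End.pow_apply_eq_add_smul_of_sub_one_sq_apply_eq_zero {R M : Type*} [CommRing R]
    [AddCommGroup M] [Module R M] (f : Module.End R M) {q : M} (hq : (f - 1) ((f - 1) q) = 0)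
    (m : ℕ) : (f ^ m) q = q + (m : R) • (f - 1) q := by
  induction m with
  | zero => simp
  | succ m ih =>
    have hfq : f q = q + (f - 1) q := by simp
    have hfNq : f ((f - 1) q) = (f - 1) q := by
      simpa [sub_eq_zero] using hq
    rw [pow_succ', mul_apply, ih, map_add, map_smul, hfq, hfNq, Nat.cast_succ, add_smul, one_smul]
    abel

theorem not_isBounded_range_add_natCast_smul {𝕜 E : Type*} [RCLike 𝕜] [NormedAddCommGroup E]
    [NormedSpace 𝕜 E] (u : E) {v : E} (hv : v ≠ 0) :
    ¬ IsBounded (range fun m : ℕ => u + (m : 𝕜) • v) := by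
  rintro hbdd
  obtain ⟨C, hC⟩ := isBounded_iff_forall_norm_le.mp hbdd
  obtain ⟨m, hm⟩ := exists_nat_gt ((C + ‖u‖) / ‖v‖)
  have hmv : (m : ℝ) * ‖v‖ ≤ C + ‖u‖ := calc
    (m : ℝ) * ‖v‖ = ‖(m : 𝕜) • v‖ := by rw [norm_smul, RCLike.norm_natCast]
    _ ≤ ‖u + (m : 𝕜) • v‖ + ‖u‖ := norm_le_add_norm_add' _ _
    _ ≤ C + ‖u‖ := by gcongr; exact hC _ ⟨m, rfl⟩
  rw [div_lt_iff₀ (norm_pos_iff.mpr hv)] at hm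
  linarith

section
variable {𝕜 E : Type*} [RCLike 𝕜] [NormedAddCommGroup E] [NormedSpace 𝕜 E]
  [FiniteDimensional 𝕜 E]

theorem LinearMap.apply_eq_self_or_not_isBounded_range_pow_apply {f : E →ₗ[𝕜] E}
    (hf : IsNilpotent (f - 1)) (p : E) :
    f p = p ∨ ¬ IsBounded (Set.range fun m : ℕ => (f ^ m) p) := by
  refine or_iff_not_imp_left.mpr fun hfp hbdd => ?_
  set N := f - 1
  have hNp : N p ≠ 0 := by simpa [N, sub_eq_zero] using hfp
  obtain ⟨k, hk, hk'⟩ := Module.End.exists_pow_apply_ne_zero_and_apply_eq_zero hf hNp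
  set q := (N ^ k) p
  have hNq : N q = (N ^ k) (N p) := by
    rw [← Module.End.mul_apply, ← Module.End.mul_apply, pow_mul_comm']
  have hNkf : ∀ m : ℕ, (N ^ k) ((f ^ m) p) = q + (m : 𝕜) • N q := fun m => by
    rw [← Module.End.pow_apply_eq_add_smul_of_sub_one_sq_apply_eq_zero f (hNq ▸ hk') m,
      ← Module.End.mul_apply, ← Module.End.mul_apply,
      (((Commute.refl f).sub_right (Commute.one_right f)).pow_pow m k).eq]
  have hbdd' := (LinearMap.toContinuousLinearMap (N ^ k)).lipschitz.isBounded_image hbdd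
  rw [← Set.range_comp] at hbdd'
  exact not_isBounded_range_add_natCast_smul q (hNq ▸ hk)
    (by simpa [Function.comp_def, hNkf] using hbdd')

theorem LinearMap.finite_forwardOrbitIn_of_isNilpotent_pow_sub_one {f : E →ₗ[𝕜] E} {K : ℕ}
    (hK : 0 < K) (hf : IsNilpotent (f ^ K - 1)) {s : Set E} (hs : IsBounded s) (p : E) :
    (forwardOrbitIn f s p).Finite := by
  rcases (f ^ K).apply_eq_self_or_not_isBounded_range_pow_apply hf p with hper | hunbdd
  · have hper' : f^[K] p = p := by rwa [Module.End.pow_apply] at hper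
    exact IsPeriodicPt.finite_forwardOrbitIn hper' hK
  · obtain ⟨m, hm⟩ : ∃ m : ℕ, f^[K * m] p ∉ s := by
      by_contra! hall
      refine hunbdd (hs.subset ?_)
      rintro _ ⟨m, rfl⟩
      simpa [← pow_mul, Module.End.coe_pow] using hall m
    exact finite_forwardOrbitIn_of_iterate_notMem hm

end

theorem Matrix.finite_forwardOrbitIn_mulVec {n : Type*} [Fintype n] [DecidableEq n]
    (A : Matrix n n ℂ) (h : ∀ μ ∈ spectrum ℂ A, ∃ k, 1 ≤ k ∧ μ ^ k = 1)
    {s : Set (n → ℂ)} (hs : IsBounded s) (p : n → ℂ) :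
    (forwardOrbitIn A.mulVec s p).Finite := by
  obtain ⟨K, hK, hnil⟩ := A.exists_isNilpotent_pow_sub_one h
  have hnil' : IsNilpotent (toLinAlgEquiv' A ^ K - 1) := by
    simpa using hnil.map (toLinAlgEquiv' (R := ℂ) (n := n))
  have hcoe : ⇑(toLinAlgEquiv' A) = A.mulVec := funext (toLinAlgEquiv'_apply A)
  rw [← hcoe]
  exact LinearMap.finite_forwardOrbitIn_of_isNilpotent_pow_sub_one hK hnil' hs p

/-- If all eigenvalues of the invertible matrix `A` are roots of unity, then the linear map
`x ↦ Ax` has the finite orbits property in every bounded neighborhood of `0`. -/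
theorem linear_finite_orbits_of_eigenvalues_root_of_unity {n : ℕ}
    (A : Matrix (Fin n) (Fin n) ℂ) (hA : IsUnit A.det)
    (hroots : ∀ μ ∈ spectrum ℂ A, ∃ k : ℕ, 1 ≤ k ∧ μ ^ k = 1) :
    ∀ B ∈ 𝓝 (0 : Fin n → ℂ), Bornology.IsBounded B →
      ∀ p ∈ B, (orbitIn A.mulVec A⁻¹.mulVec B p).Finite := by
  intro B _ hB p _
  have hroots_inv : ∀ μ ∈ spectrum ℂ A⁻¹, ∃ k : ℕ, 1 ≤ k ∧ μ ^ k = 1 := by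
    rw [A.spectrum_nonsing_inv hA]
    intro μ hμ
    obtain ⟨k, hk, hμk⟩ := hroots μ⁻¹ hμ
    exact ⟨k, hk, by rwa [inv_pow, inv_eq_one] at hμk⟩
  exact (A.finite_forwardOrbitIn_mulVec hroots hB p).union
    (A⁻¹.finite_forwardOrbitIn_mulVec hroots_inv hB p)
end

section
/- Let X be a continuum (a nonempty connected compact Hausdorff topological space) and suppose X = ⋃_{j=1}^∞ X_j where the X_j are pairwise disjoint closed subsets of X. Then at most one of the sets X_j is nonempty. -/
open Topology Filter Set

/-- In a compact Hausdorff space, a point's connected component can be separated from a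
disjoint closed set by a clopen set. -/
lemma exists_isClopen_disjoint {Y : Type*} [TopologicalSpace Y] [CompactSpace Y] [T2Space Y]
    (x : Y) (L : Set Y) (hL : IsClosed L) (h : Disjoint (connectedComponent x) L) :
    ∃ Z : Set Y, IsClopen Z ∧ x ∈ Z ∧ Disjoint Z L := by
  have hcover : L ⊆ ⋃ s : { s : Set Y // IsClopen s ∧ x ∈ s }, (↑s : Set Y)ᶜ := by
    intro y hy
    by_contra hmem
    simp only [mem_iUnion, mem_compl_iff, not_exists, not_not] at hmem
    have : y ∈ connectedComponent x := by
      rw [connectedComponent_eq_iInter_isClopen x]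
      exact mem_iInter.2 hmem
    exact absurd hy (disjoint_left.mp h this)
  obtain ⟨t, ht⟩ := hL.isCompact.elim_finite_subcover
    (fun s : { s : Set Y // IsClopen s ∧ x ∈ s } => (↑s : Set Y)ᶜ)
    (fun s => s.2.1.1.isOpen_compl) hcover
  refine ⟨⋂ s ∈ t, (s : Set Y), ?_, ?_, ?_⟩
  · exact isClopen_biInter_finset fun s _ => s.2.1
  · exact mem_iInter₂.2 fun s _ => s.2.2
  · rw [Set.disjoint_left]
    intro y hy hyL
    obtain ⟨s, hst, hs⟩ := Set.mem_iUnion₂.mp (ht hyL)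
    exact hs (mem_iInter₂.mp hy s hst)

/-- Boundary bumping: in a continuum, the connected component of a point in a proper closed
subset meets the closure of the complement. -/
lemma bump {Y : Type*} [TopologicalSpace Y] [CompactSpace Y] [T2Space Y] [ConnectedSpace Y]
    (A : Set Y) (hA : IsClosed A) (x : Y) (hx : x ∈ A) (hA' : Aᶜ.Nonempty) :
    (connectedComponentIn A x ∩ closure Aᶜ).Nonempty := by
  by_contra hdisj
  rw [Set.not_nonempty_iff_eq_empty, ← Set.disjoint_iff_inter_eq_empty] at hdisj
  haveI : CompactSpace A := isCompact_iff_compactSpace.mp hA.isCompact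
  set x' : A := ⟨x, hx⟩
  have hLd : Disjoint (connectedComponent x') (Subtype.val ⁻¹' closure Aᶜ) := by
    rw [Set.disjoint_left]
    intro y hy hyL
    have : (y : Y) ∈ connectedComponentIn A x := by
      rw [connectedComponentIn_eq_image hx]
      exact ⟨y, hy, rfl⟩
    exact disjoint_left.mp hdisj this hyL
  obtain ⟨Z, hZ, hxZ, hZd⟩ := exists_isClopen_disjoint x' (Subtype.val ⁻¹' closure Aᶜ)
    (isClosed_closure.preimage continuous_subtype_val) hLd
  set E : Set Y := Subtype.val '' Z with hE
  have hEA : E ⊆ A := by rintro _ ⟨z, _, rfl⟩; exact z.2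
  have hEcl : IsClosed E :=
    (hZ.1.isCompact.image continuous_subtype_val).isClosed
  have hEd : Disjoint E (closure Aᶜ) := by
    rw [Set.disjoint_left]
    rintro _ ⟨z, hz, rfl⟩ hmem
    exact disjoint_left.mp hZd hz hmem
  have hEint : E ⊆ interior A := by
    rw [← compl_compl A, interior_compl]
    exact fun y hy hmem => disjoint_left.mp hEd hy hmem
  have hEop : IsOpen E := by
    obtain ⟨U, hU, hUZ⟩ := isOpen_induced_iff.mp hZ.2
    have hEU : E = U ∩ interior A := by
      apply Set.Subset.antisymm
      · intro y hy
        refine ⟨?_, hEint hy⟩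
        obtain ⟨z, hz, rfl⟩ := hy
        have : z ∈ Subtype.val ⁻¹' U := by rw [hUZ]; exact hz
        exact this
      · rintro y ⟨hyU, hyA⟩
        exact ⟨⟨y, interior_subset hyA⟩, by rw [← hUZ] at *; exact hyU, rfl⟩
    rw [hEU]; exact hU.inter isOpen_interior
  have hEclopen : IsClopen E := by rw [IsClopen]; exact ⟨hEcl, hEop⟩
  have hor : E = ∅ ∨ E = Set.univ := isClopen_iff.mp hEclopen
  rcases hor with h | h
  · have : x ∈ E := ⟨x', hxZ, rfl⟩
    rw [h] at this
    exact this
  · obtain ⟨y, hy⟩ := hA'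
    exact hy (hEA (h ▸ Set.mem_univ y))

/-- Sierpiński's theorem: a continuum (nonempty connected compact Hausdorff space) cannot be
partitioned into countably many pairwise disjoint nonempty closed sets; more precisely, if
`X = ⋃ⱼ Xⱼ` with the `Xⱼ` pairwise disjoint and closed, then at most one `Xⱼ` is nonempty. -/
theorem sierpinski_continuum {X : Type*} [TopologicalSpace X] [CompactSpace X] [T2Space X]
    [ConnectedSpace X] (Xj : ℕ → Set X) (hclosed : ∀ j, IsClosed (Xj j))
    (hdisj : Pairwise (Function.onFun Disjoint Xj)) (hcover : ⋃ j, Xj j = Set.univ) :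
    ∀ i j, (Xj i).Nonempty → (Xj j).Nonempty → i = j := by
  intro i0 j0 hi0 hj0
  by_contra hne
  -- the invariant on the shrinking sequence of subcontinua
  set Good : Set X → Prop := fun C => IsCompact C ∧ IsPreconnected C ∧
    ∃ a b, a ≠ b ∧ (C ∩ Xj a).Nonempty ∧ (C ∩ Xj b).Nonempty with hGood
  have mem_cover : ∀ z : X, ∃ m, z ∈ Xj m := by
    intro z
    have : z ∈ ⋃ j, Xj j := hcover ▸ Set.mem_univ z
    exact Set.mem_iUnion.mp this
  -- the shrinking step
  have step : ∀ (n : ℕ) (C : Set X), Good C →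
      ∃ C', C' ⊆ C ∧ Good C' ∧ C' ∩ Xj n = ∅ := by
    intro n C hC
    obtain ⟨hCc, hCp, a, b, hab, ha, hb⟩ := hC
    by_cases hCn : (C ∩ Xj n).Nonempty
    swap
    · exact ⟨C, subset_rfl, ⟨hCc, hCp, a, b, hab, ha, hb⟩,
        Set.not_nonempty_iff_eq_empty.mp hCn⟩
    -- pick j ≠ n with C ∩ Xj j nonempty
    obtain ⟨j, hjn, hj⟩ : ∃ j, j ≠ n ∧ (C ∩ Xj j).Nonempty := by
      rcases eq_or_ne a n with rfl | h
      · exact ⟨b, fun h => hab h.symm, hb⟩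
      · exact ⟨a, h, ha⟩
    obtain ⟨x, hxC, hxj⟩ := hj
    -- separate Xj n from Xj j by open sets
    obtain ⟨U, V, hUo, hVo, hnU, hjV, hUV⟩ :=
      SeparatedNhds.of_isCompact_isCompact (hclosed n).isCompact (hclosed j).isCompact
        (hdisj (Ne.symm hjn))
    have hclUV : closure U ⊆ Vᶜ :=
      closure_minimal (fun _ hx => Set.disjoint_left.mp hUV hx) hVo.isClosed_compl
    -- pass to the subtype ↥C
    haveI : CompactSpace C := isCompact_iff_compactSpace.mp hCc
    haveI : ConnectedSpace C := Subtype.connectedSpace ⟨⟨x, hxC⟩, hCp⟩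
    set A : Set C := (Subtype.val ⁻¹' U)ᶜ with hA
    have hAcl : IsClosed A := (hUo.preimage continuous_subtype_val).isClosed_compl
    have hxA : (⟨x, hxC⟩ : C) ∈ A := by
      simp only [hA, Set.mem_compl_iff, Set.mem_preimage]
      exact fun hmem => Set.disjoint_left.mp hUV hmem (hjV hxj)
    have hAc : Aᶜ.Nonempty := by
      obtain ⟨y, hyC, hyn⟩ := hCn
      exact ⟨⟨y, hyC⟩, by simpa [hA] using hnU hyn⟩
    obtain ⟨z', hz'K, hz'cl⟩ := bump A hAcl ⟨x, hxC⟩ hxA hAc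
    set K := connectedComponentIn A (⟨x, hxC⟩ : C)
    set C' : Set X := Subtype.val '' K with hC'
    have hKA : K ⊆ A := connectedComponentIn_subset A _
    refine ⟨C', by rintro _ ⟨w, _, rfl⟩; exact w.2, ⟨?_, ?_, ?_⟩, ?_⟩
    · -- compact
      haveI : CompactSpace A := isCompact_iff_compactSpace.mp hAcl.isCompact
      have : K = Subtype.val '' connectedComponent (⟨⟨x, hxC⟩, hxA⟩ : A) :=
        connectedComponentIn_eq_image hxA
      rw [hC', this, Set.image_image]
      exact (isClosed_connectedComponent.isCompact.image
        (continuous_subtype_val.comp continuous_subtype_val))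
    · exact (isPreconnected_connectedComponentIn).image _
        continuous_subtype_val.continuousOn
    · -- meets two of the sets: Xj j and something in closure U
      have hzcl : (z' : X) ∈ closure U := by
        have h1 : (Aᶜ : Set C) = Subtype.val ⁻¹' U := by simp [hA]
        have h2 : closure (Aᶜ : Set C) ⊆ Subtype.val ⁻¹' closure U := by
          rw [h1]
          exact Continuous.closure_preimage_subset continuous_subtype_val U
        exact h2 hz'cl
      obtain ⟨m, hm⟩ := mem_cover (z' : X)
      have hmj : m ≠ j := by
        rintro rfl
        exact hclUV hzcl (hjV hm)
      exact ⟨j, m, hmj.symm, ⟨x, ⟨⟨x, hxC⟩, mem_connectedComponentIn hxA, rfl⟩, hxj⟩,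
        ⟨z', ⟨z', hz'K, rfl⟩, hm⟩⟩
    · -- avoids Xj n
      rw [Set.eq_empty_iff_forall_notMem]
      rintro y ⟨⟨w, hwK, rfl⟩, hyn⟩
      exact hKA hwK (hnU hyn)
  have good_univ : Good Set.univ :=
    ⟨isCompact_univ, isPreconnected_univ, i0, j0, hne, by simpa using hi0, by simpa using hj0⟩
  choose! f hf1 hf2 hf3 using step
  set F : ℕ → {C : Set X // Good C} := fun n =>
    Nat.rec ⟨Set.univ, good_univ⟩ (fun n p => ⟨f n p.1, hf2 n p.1 p.2⟩) n with hF
  have hFsub : ∀ n, (F (n + 1)).1 ⊆ (F n).1 := fun n => hf1 n (F n).1 (F n).2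
  have hFavoid : ∀ n, (F (n + 1)).1 ∩ Xj n = ∅ := fun n => hf3 n (F n).1 (F n).2
  have hFne : ∀ n, (F n).1.Nonempty := by
    intro n
    obtain ⟨_, _, a, b, _, ha, _⟩ := (F n).2
    exact ⟨ha.choose, ha.choose_spec.1⟩
  have hFcl : ∀ n, IsClosed (F n).1 := fun n => (F n).2.1.isClosed
  obtain ⟨z, hz⟩ := IsCompact.nonempty_iInter_of_sequence_nonempty_isCompact_isClosed
    (fun n => (F n).1) hFsub hFne (F 0).2.1 hFcl
  obtain ⟨m, hm⟩ := mem_cover z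
  have : z ∈ (F (m + 1)).1 ∩ Xj m := ⟨Set.mem_iInter.mp hz (m + 1), hm⟩
  rw [hFavoid m] at this
  exact this
end

section
/- Let λ ∈ ℂ with |λ| = 1 and suppose λ is a Cremer number, i.e. λ is not a root of unity and liminf_{m→∞} |λᵐ − 1|^{1/m} = 0. Then there exist sequences (mⱼ)ⱼ≥1 of natural numbers and (Mⱼ)ⱼ≥1 of positive reals, and sequences (kⱼ)ⱼ≥1, (rⱼ)ⱼ≥1 of natural numbers, such that for all j ≥ 1: (C1) Mⱼ = |λ^{mⱼ} − 1|^{−1/mⱼ} and Mⱼ ≥ 4j²; (C2) 2^{mⱼ} ≥ 1 + j + Σ_{ℓ=1}^{j−1} 2·(2ℓ)^{m_ℓ}·j^{m_ℓ}; (C3) min(mⱼ, rⱼ) > max(m_{j−1}, r_{j−1}) for j ≥ 2; (C4) |λ^{kⱼ mⱼ} − 1| ≥ 1; (C5) kⱼ · Σ_{ℓ=rⱼ}^∞ 2^{−ℓ} < 1. -/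
/-!
The sequences are built stage by stage. At stage `j` the Cremer condition supplies arbitrarily
large `m` with `|λᵐ - 1|^{1/m} ≤ 1/(4j²)`; taking `m` large also gives (C2) and (C3), since the sum
in (C2) only involves earlier `m_l`, which are bounded by the level reached before stage `j`.
As `λᵐ ≠ 1` lies on the unit circle, some power `(λᵐ)ᵏ` has argument in `[π/2, 3π/2]` modulo
`2π`, hence is at distance at least `1` from `1`; finally any `r > k` gives `k · 2^{1-r} < 1`.
-/

open Topology Filter

/-- `λ` is a Cremer number: it has modulus one, is not a root of unity, and
`liminf_{m→∞} |λᵐ − 1|^{1/m} = 0`. -/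
def IsCremer (lam : ℂ) : Prop :=
  ‖lam‖ = 1 ∧ (∀ k : ℕ, 1 ≤ k → lam ^ k ≠ 1) ∧
    Filter.liminf (fun m : ℕ => ‖lam ^ m - 1‖ ^ ((1 : ℝ) / m)) Filter.atTop = 0

theorem exists_seq_of_forall_exists {α : Type*} [Nonempty α] (R : ℕ → α → α → Prop)
    (h : ∀ n a, ∃ b, R n a b) : ∃ f : ℕ → α, ∀ n, R n (f n) (f (n + 1)) := by
  choose g hg using h
  exact ⟨fun n => Nat.rec (Classical.arbitrary α) g n, fun n => hg n _⟩

theorem Complex.norm_exp_ofReal_mul_I_sub_one_sq (x : ℝ) :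
    ‖Complex.exp (x * Complex.I) - 1‖ ^ 2 = 2 - 2 * Real.cos x := by
  rw [Complex.sq_norm, Complex.normSq_apply]
  simp only [Complex.sub_re, Complex.sub_im, Complex.exp_ofReal_mul_I_re,
    Complex.exp_ofReal_mul_I_im, Complex.one_re, Complex.one_im, sub_zero]
  nlinarith [Real.sin_sq_add_cos_sq x]

open Real in
theorem exists_one_le_norm_pow_sub_one {μ : ℂ} (hμ : ‖μ‖ = 1) (hμ1 : μ ≠ 1) :
    ∃ k : ℕ, 1 ≤ ‖μ ^ k - 1‖ := by
  set θ := Complex.arg μ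
  have hexp : Complex.exp (θ * Complex.I) = μ := by
    simpa [hμ] using Complex.norm_mul_exp_arg_mul_I μ
  have hθ : 0 < |θ| := abs_pos.mpr fun h => hμ1 (by simpa [h] using hexp.symm)
  -- the first multiple of `|θ|` beyond `π / 2` lands in `[π / 2, 3π / 2]`, where `cos ≤ 0`
  set k := ⌈π / 2 / |θ|⌉₊
  have hk_ge : π / 2 ≤ k * |θ| := (div_le_iff₀ hθ).mp (Nat.le_ceil _)
  have hk_le : k * |θ| ≤ π + π / 2 := by
    have hk : (k : ℝ) < π / 2 / |θ| + 1 := Nat.ceil_lt_add_one (by positivity)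
    have := mul_lt_mul_of_pos_right hk hθ
    rw [add_mul, div_mul_cancel₀ _ hθ.ne'] at this
    linarith [Complex.abs_arg_le_pi μ]
  have hcos : Real.cos (k * θ) ≤ 0 := by
    rw [← Real.cos_abs, abs_mul, Nat.abs_cast]
    exact Real.cos_nonpos_of_pi_div_two_le_of_le hk_ge hk_le
  have hpow : μ ^ k = Complex.exp (((k * θ : ℝ) : ℂ) * Complex.I) := by
    rw [← hexp, ← Complex.exp_nat_mul]
    push_cast
    ring_nf
  refine ⟨k, ?_⟩
  have hsq := Complex.norm_exp_ofReal_mul_I_sub_one_sq (k * θ)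
  rw [← hpow] at hsq
  nlinarith [norm_nonneg (μ ^ k - 1)]

theorem natCast_mul_tsum_half_pow_add_lt_one {k r : ℕ} (hkr : k < r) :
    (k : ℝ) * ∑' i : ℕ, ((1 : ℝ) / 2) ^ (i + r) < 1 := by
  have htail : ∑' i : ℕ, ((1 : ℝ) / 2) ^ (i + r) = 2 / 2 ^ r := by
    simp_rw [pow_add]
    rw [tsum_mul_right, tsum_geometric_two, div_pow, one_pow]
    ring
  have h2k : 2 * k < 2 ^ r :=
    calc 2 * k < 2 * 2 ^ k := by have := Nat.lt_two_pow_self (n := k); omega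
      _ = 2 ^ (k + 1) := by ring
      _ ≤ 2 ^ r := Nat.pow_le_pow_right two_pos hkr
  rw [htail, mul_div_assoc', div_lt_one (by positivity)]
  exact_mod_cast (by omega : k * 2 < 2 ^ r)

theorem sum_Ico_two_mul_pow_le {j s : ℕ} (m : ℕ → ℕ) (hm : ∀ l < j, m l ≤ s) :
    ∑ l ∈ Finset.Ico 1 j, 2 * (2 * (l : ℝ)) ^ m l * (j : ℝ) ^ m l ≤
      j * (2 * (2 * (j : ℝ) ^ 2) ^ s) := by
  have hterm : ∀ l ∈ Finset.Ico 1 j,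
      2 * (2 * (l : ℝ)) ^ m l * (j : ℝ) ^ m l ≤ 2 * (2 * (j : ℝ) ^ 2) ^ s := by
    intro l hl
    obtain ⟨hl1, hlj⟩ := Finset.mem_Ico.mp hl
    have hl1' : (1 : ℝ) ≤ l := by exact_mod_cast hl1
    have hlj' : (l : ℝ) ≤ j := by exact_mod_cast hlj.le
    calc 2 * (2 * (l : ℝ)) ^ m l * (j : ℝ) ^ m l = 2 * (2 * l * j) ^ m l := by ring
      _ ≤ 2 * (2 * j ^ 2) ^ m l := by gcongr 2 * ?_ ^ _; nlinarith
      _ ≤ 2 * (2 * j ^ 2) ^ s := by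
        gcongr 2 * ?_
        exact pow_le_pow_right₀ (by nlinarith) (hm l hlj)
  calc _ ≤ (Finset.Ico 1 j).card • (2 * (2 * (j : ℝ) ^ 2) ^ s) :=
        Finset.sum_le_card_nsmul _ _ _ hterm
    _ ≤ j * (2 * (2 * (j : ℝ) ^ 2) ^ s) := by
        rw [nsmul_eq_mul, Nat.card_Ico]
        gcongr
        exact_mod_cast Nat.sub_le j 1

theorem IsCremer.frequently_le_rpow_neg {lam : ℂ} (hlam : IsCremer lam) (A : ℝ) :
    ∃ᶠ m : ℕ in atTop, A ≤ ‖lam ^ m - 1‖ ^ (-(1 : ℝ) / m) := by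
  -- without an upper bound the `liminf` in `IsCremer` could be the junk value `0`
  have hbdd : ∀ m : ℕ, ‖lam ^ m - 1‖ ^ ((1 : ℝ) / m) ≤ 2 := by
    intro m
    have h2 : ‖lam ^ m - 1‖ ≤ 2 := by
      simpa [norm_pow, hlam.1, one_add_one_eq_two] using norm_sub_le (lam ^ m) 1
    have he : (1 : ℝ) / m ≤ 1 := by simpa using Nat.cast_inv_le_one (α := ℝ) m
    rcases le_total ‖lam ^ m - 1‖ 1 with h1 | h1
    · linarith [Real.rpow_le_one (norm_nonneg _) h1 (by positivity : (0 : ℝ) ≤ 1 / m)]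
    · exact (Real.rpow_le_self_of_one_le h1 he).trans h2
  have hsmall : ∃ᶠ m : ℕ in atTop, ‖lam ^ m - 1‖ ^ ((1 : ℝ) / m) < 1 / max A 1 :=
    frequently_lt_of_liminf_lt (isBoundedUnder_of ⟨2, hbdd⟩).isCoboundedUnder_ge
      (hlam.2.2 ▸ by positivity)
  refine (hsmall.and_eventually (eventually_ge_atTop 1)).mono fun m ⟨hm, hm1⟩ => ?_
  have hpos : 0 < ‖lam ^ m - 1‖ ^ ((1 : ℝ) / m) :=
    Real.rpow_pos_of_pos (norm_pos_iff.mpr (sub_ne_zero.mpr (hlam.2.1 m hm1))) _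
  rw [neg_div, Real.rpow_neg (norm_nonneg _)]
  calc A ≤ max A 1 := le_max_left _ _
    _ = (1 / max A 1)⁻¹ := by rw [one_div, inv_inv]
    _ ≤ _ := inv_anti₀ hpos hm.le

/-- Stage `j` of the construction: `p = (mⱼ, kⱼ, rⱼ)`, chosen above the level `s` reached by the
earlier stages. The term `j * (2 * (2 * j ^ 2) ^ s)` bounds the sum in (C2) once every earlier
`m_l` is at most `s`. -/
def IsCremerStage (lam : ℂ) (j s : ℕ) (p : ℕ × ℕ × ℕ) : Prop :=
  s < p.1 ∧ s < p.2.2 ∧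
    4 * (j : ℝ) ^ 2 ≤ ‖lam ^ p.1 - 1‖ ^ (-(1 : ℝ) / p.1) ∧
    1 + j + j * (2 * (2 * (j : ℝ) ^ 2) ^ s) ≤ 2 ^ p.1 ∧
    1 ≤ ‖lam ^ (p.2.1 * p.1) - 1‖ ∧
    (p.2.1 : ℝ) * ∑' i : ℕ, ((1 : ℝ) / 2) ^ (i + p.2.2) < 1

theorem IsCremer.exists_isCremerStage {lam : ℂ} (hlam : IsCremer lam) (j s : ℕ) :
    ∃ p, IsCremerStage lam j s p := by
  set B : ℝ := 1 + j + j * (2 * (2 * (j : ℝ) ^ 2) ^ s)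
  obtain ⟨m, hM, hm⟩ := ((hlam.frequently_le_rpow_neg (4 * j ^ 2)).and_eventually
    (eventually_ge_atTop (s + 1 + ⌈B⌉₊))).exists
  obtain ⟨k, hk⟩ := exists_one_le_norm_pow_sub_one (by rw [norm_pow, hlam.1, one_pow])
    (hlam.2.1 m (by omega))
  refine ⟨(m, k, k + s + 1), by omega, by dsimp only; omega, hM, ?_, by rwa [mul_comm, pow_mul],
    natCast_mul_tsum_half_pow_add_lt_one (by dsimp only; omega)⟩
  calc B ≤ ⌈B⌉₊ := Nat.le_ceil B
    _ ≤ m := by exact_mod_cast (by omega : ⌈B⌉₊ ≤ m)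
    _ ≤ 2 ^ m := by exact_mod_cast Nat.lt_two_pow_self.le

/-- For a Cremer number `λ` there are sequences `(mⱼ)`, `(Mⱼ)`, `(kⱼ)`, `(rⱼ)` satisfying
the conditions (C1)–(C5). -/
theorem exists_cremer_sequences (lam : ℂ) (hlam : IsCremer lam) :
    ∃ (m : ℕ → ℕ) (M : ℕ → ℝ) (k : ℕ → ℕ) (r : ℕ → ℕ),
      (∀ j : ℕ, 1 ≤ j →
        M j = ‖lam ^ m j - 1‖ ^ (-(1 : ℝ) / (m j)) ∧ 4 * (j : ℝ) ^ 2 ≤ M j) ∧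
      (∀ j : ℕ, 1 ≤ j →
        (1 : ℝ) + j + ∑ l ∈ Finset.Ico 1 j,
            2 * (2 * (l : ℝ)) ^ m l * (j : ℝ) ^ m l ≤ (2 : ℝ) ^ m j) ∧
      (∀ j : ℕ, 2 ≤ j → max (m (j - 1)) (r (j - 1)) < min (m j) (r j)) ∧
      (∀ j : ℕ, 1 ≤ j → 1 ≤ ‖lam ^ (k j * m j) - 1‖) ∧
      (∀ j : ℕ, 1 ≤ j → (k j : ℝ) * ∑' i : ℕ, ((1 : ℝ) / 2) ^ (i + r j) < 1) := by
  obtain ⟨f, hf⟩ := exists_seq_of_forall_exists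
    (fun i p q => IsCremerStage lam (i + 1) (max p.1 p.2.2) q)
    (fun i _ => hlam.exists_isCremerStage _ _)
  have hlevel : StrictMono fun j => max (f j).1 (f j).2.2 :=
    strictMono_nat_of_lt_succ fun i => (hf i).1.trans_le (le_max_left _ _)
  refine ⟨fun j => (f j).1, fun j => ‖lam ^ (f j).1 - 1‖ ^ (-(1 : ℝ) / (f j).1),
    fun j => (f j).2.1, fun j => (f j).2.2, ?_, ?_, ?_, ?_, ?_⟩ <;>
    intro j hj <;> obtain ⟨i, rfl⟩ := Nat.exists_eq_add_of_le' hj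
  · exact ⟨rfl, (hf i).2.2.1⟩
  · have hsum := sum_Ico_two_mul_pow_le (j := i + 1) (fun l => (f l).1) fun l hl =>
      (le_max_left _ _).trans (hlevel.monotone (Nat.le_of_lt_succ hl))
    linarith [(hf i).2.2.2.1]
  · exact lt_min (hf (i + 1)).1 (hf (i + 1)).2.1
  · exact (hf i).2.2.2.2.1
  · exact (hf i).2.2.2.2.2
end

section
/- Let λ be a Cremer number and let (mⱼ), (Mⱼ), (kⱼ), (rⱼ) satisfy conditions (C1)–(C5) of the construction. Let a(x) = Σ_{j=1}^∞ (2j/Mⱼ)^{mⱼ} x_{[j]}^{mⱼ} and L_k the averaging operator (L_k A)(x) = Σ_{u=0}^{k−1} A(λᵘx). Fix j ≥ 1 and x ∈ ℂⁿ with max_{1≤k≤n}|x_k| ≤ j and |x_{[j]}| ≥ 1/j. Then j ≤ |(L_{kⱼ} a)(x)| ≤ 2(2j²)^{mⱼ} + 2^{mⱼ} − j. -/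
/-- `resIdx n hn j` is the (0-based) index in `Fin n` corresponding to the unique element of
`{1, ..., n}` congruent to `j` modulo `n`. -/
def resIdx (n : ℕ) (hn : 0 < n) (j : ℕ) : Fin n := ⟨(j - 1) % n, Nat.mod_lt _ hn⟩

/-! Averaging over `u < k` multiplies the `L`-th monomial of `a` by the geometric sum
`∑_{u<k} λ^{u mₗ}`, of modulus `|λ^{k mₗ} − 1| · Mₗ^{mₗ}` by (C1): at most `2 Mₗ^{mₗ}`, and for
`L = j` at least `Mⱼ^{mⱼ}` by (C4). So the `j`-th term of `L_{kⱼ} a` has modulus between `2^{mⱼ}`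
and `2(2j²)^{mⱼ}`, the earlier terms add up to at most `2^{mⱼ} − 1 − j` by (C2), and the later
ones, each at most `kⱼ 2^{−mₗ}` because `2L j / Mₗ ≤ 1/2`, add up to less than `1` by (C3) and
(C5). -/

open Finset

section GeomSum

variable {K : Type*} [NormedDivisionRing K] {z : K}

theorem norm_geom_sum_le_of_norm_eq_one (hz : ‖z‖ = 1) (k : ℕ) :
    ‖∑ u ∈ range k, z ^ u‖ ≤ k :=
  (norm_sum_le _ _).trans_eq (by simp [norm_pow, hz])

theorem norm_geom_sum_le_two_mul_inv (hz : ‖z‖ = 1) (hz1 : z ≠ 1) (k : ℕ) :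
    ‖∑ u ∈ range k, z ^ u‖ ≤ 2 * ‖z - 1‖⁻¹ := by
  rw [geom_sum_eq hz1, norm_div, div_eq_mul_inv]
  gcongr
  calc ‖z ^ k - 1‖ ≤ ‖z ^ k‖ + ‖(1 : K)‖ := norm_sub_le _ _
    _ = 2 := by norm_num [norm_pow, hz]

theorem inv_norm_sub_one_le_norm_geom_sum (hz1 : z ≠ 1) {k : ℕ} (hk : 1 ≤ ‖z ^ k - 1‖) :
    ‖z - 1‖⁻¹ ≤ ‖∑ u ∈ range k, z ^ u‖ := by
  rw [geom_sum_eq hz1, norm_div, div_eq_mul_inv]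
  exact le_mul_of_one_le_left (by positivity) hk

end GeomSum

theorem sum_range_tsum_mul_pow_pow {𝕜 : Type*} [NormedField 𝕜] [CompleteSpace 𝕜]
    {b : ℕ → 𝕜} {e : ℕ → ℕ} {z : 𝕜} (hz : ‖z‖ = 1) (hb : Summable fun l => ‖b l‖) (k : ℕ) :
    ∑ u ∈ range k, ∑' l, b l * (z ^ u) ^ e l = ∑' l, b l * ∑ u ∈ range k, (z ^ e l) ^ u := by
  have hsum : ∀ u ∈ range k, Summable fun l => b l * (z ^ u) ^ e l := fun u _ =>
    hb.of_norm_bounded fun l => by simp [norm_pow, hz]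
  rw [← Summable.tsum_finsetSum hsum]
  refine tsum_congr fun l => ?_
  rw [mul_sum]
  exact sum_congr rfl fun u _ => by rw [← pow_mul, ← pow_mul, mul_comm u]

theorem pow_eq_inv_of_eq_rpow {A M : ℝ} {m : ℕ} (hA : 0 ≤ A) (hM : M = A ^ (-1 / (m : ℝ)))
    (h1 : 1 < M) : M ^ m = A⁻¹ := by
  -- `m = 0` would make the exponent `-1 / 0 = 0`, hence `M = 1`
  have hm : (m : ℝ) ≠ 0 := by rintro hm; simp [hM, hm] at h1
  rw [hM, ← Real.rpow_natCast, ← Real.rpow_mul hA, div_mul_cancel₀ _ hm, Real.rpow_neg_one]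

theorem one_lt_of_four_mul_sq_le {L : ℕ} {M : ℝ} (hL : 1 ≤ L) (hM : 4 * (L : ℝ) ^ 2 ≤ M) :
    1 < M := by
  have : (1 : ℝ) ≤ L := by exact_mod_cast hL
  nlinarith

section CremerFactor

variable {𝕜 : Type*} [NormedDivisionRing 𝕜] {z : 𝕜} {M : ℝ} {e : ℕ}

theorem ne_one_of_eq_rpow (hM : M = ‖z - 1‖ ^ (-1 / (e : ℝ))) (h1 : 1 < M) : z ≠ 1 := by
  rintro rfl
  have := pow_eq_inv_of_eq_rpow le_rfl (by simpa using hM) h1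
  simp only [inv_zero, pow_eq_zero_iff', ne_eq] at this
  linarith [this.1]

theorem norm_geom_sum_le_two_mul_pow (hz : ‖z‖ = 1) (hM : M = ‖z - 1‖ ^ (-1 / (e : ℝ)))
    (h1 : 1 < M) (k : ℕ) : ‖∑ u ∈ range k, z ^ u‖ ≤ 2 * M ^ e := by
  rw [pow_eq_inv_of_eq_rpow (norm_nonneg _) hM h1]
  exact norm_geom_sum_le_two_mul_inv hz (ne_one_of_eq_rpow hM h1) k

theorem pow_le_norm_geom_sum (hM : M = ‖z - 1‖ ^ (-1 / (e : ℝ))) (h1 : 1 < M) {k : ℕ}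
    (hk : 1 ≤ ‖z ^ k - 1‖) : M ^ e ≤ ‖∑ u ∈ range k, z ^ u‖ := by
  rw [pow_eq_inv_of_eq_rpow (norm_nonneg _) hM h1]
  exact inv_norm_sub_one_le_norm_geom_sum (ne_one_of_eq_rpow hM h1) hk

end CremerFactor

theorem norm_sum_add_add_bounds {E : Type*} [SeminormedAddCommGroup E] {A B C : E}
    {α β₁ β₂ γ : ℝ} (hA : ‖A‖ ≤ α) (hB₁ : β₁ ≤ ‖B‖) (hB₂ : ‖B‖ ≤ β₂) (hC : ‖C‖ ≤ γ) :
    β₁ - α - γ ≤ ‖A + B + C‖ ∧ ‖A + B + C‖ ≤ α + β₂ + γ := by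
  refine ⟨?_, norm_add₃_le.trans (by linarith)⟩
  have hB : ‖B‖ ≤ ‖A + B + C‖ + ‖A‖ + ‖C‖ :=
    calc ‖B‖ = ‖A + B + C - A - C‖ := by congr 1; abel
      _ ≤ ‖A + B + C - A‖ + ‖C‖ := norm_sub_le _ _
      _ ≤ ‖A + B + C‖ + ‖A‖ + ‖C‖ := by gcongr; exact norm_sub_le _ _
  linarith

theorem tsum_nat_succ_eq_sum_Ico_add_add {E : Type*} [AddCommGroup E] [TopologicalSpace E]
    [IsTopologicalAddGroup E] [T2Space E] {f : ℕ → E}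
    (hf : Summable fun l => f (l + 1)) {j : ℕ} (hj : 1 ≤ j) :
    ∑' l, f (l + 1) = ∑ L ∈ Ico 1 j, f L + f j + ∑' i, f (i + j + 1) := by
  rw [← hf.sum_add_tsum_nat_add j, range_eq_Ico, sum_Ico_add', zero_add,
    sum_Ico_succ_top hj]

theorem add_lt_min_of_max_lt_min {m r : ℕ → ℕ}
    (h : ∀ L, 2 ≤ L → max (m (L - 1)) (r (L - 1)) < min (m L) (r L)) {j : ℕ} (hj : 1 ≤ j) :
    ∀ i, r j + i < min (m (i + j + 1)) (r (i + j + 1))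
  | 0 => by
    have base := h (j + 1) (by omega)
    simp only [Nat.add_sub_cancel] at base
    rw [zero_add]
    omega
  | i + 1 => by
    have ih := add_lt_min_of_max_lt_min h hj i
    have step := h (i + j + 1 + 1) (by omega)
    simp only [Nat.add_sub_cancel] at step
    rw [show i + 1 + j + 1 = i + j + 1 + 1 by omega]
    omega

theorem norm_tsum_le_mul_tsum_half_pow {E : Type*} [SeminormedAddCommGroup E] {f : ℕ → E}
    {C : ℝ} {r : ℕ} (hf : ∀ i, ‖f i‖ ≤ C * (1 / 2) ^ (i + r)) :
    ‖∑' i, f i‖ ≤ C * ∑' i : ℕ, (1 / 2 : ℝ) ^ (i + r) :=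
  tsum_of_norm_bounded
    (((summable_nat_add_iff r).2 summable_geometric_two).hasSum.mul_left C) hf

/-- The `L`-th term of the series `a(x)`, with `y L` standing for `x_{[L]}`. -/
noncomputable def seriesTerm (m : ℕ → ℕ) (M : ℕ → ℝ) (y : ℕ → ℂ) (L : ℕ) : ℂ :=
  ((2 * L / M L : ℝ) : ℂ) ^ m L * y L ^ m L

/-- The `L`-th term of `(L_K a)(x) = ∑_{u<K} a(λᵘ x)` once the two sums are exchanged. -/
noncomputable def averagedTerm (lam : ℂ) (m : ℕ → ℕ) (M : ℕ → ℝ) (K : ℕ) (y : ℕ → ℂ)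
    (L : ℕ) : ℂ :=
  seriesTerm m M y L * ∑ u ∈ range K, (lam ^ m L) ^ u

section Terms

variable {lam : ℂ} {m : ℕ → ℕ} {M : ℕ → ℝ} {K : ℕ} {y : ℕ → ℂ} {L : ℕ} {t : ℝ}

theorem norm_seriesTerm (hM : 0 ≤ M L) :
    ‖seriesTerm m M y L‖ = (2 * L / M L) ^ m L * ‖y L‖ ^ m L := by
  rw [seriesTerm, norm_mul, norm_pow, norm_pow, Complex.norm_real,
    Real.norm_of_nonneg (by positivity)]

theorem norm_seriesTerm_le_half_pow (hM : 4 * (L : ℝ) ^ 2 ≤ M L) (ht : 0 < t)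
    (htL : t ≤ L) (hy : ‖y L‖ ≤ t) : ‖seriesTerm m M y L‖ ≤ (1 / 2) ^ m L := by
  have hMpos : 0 < M L := by nlinarith
  rw [norm_seriesTerm hMpos.le, ← mul_pow]
  gcongr
  calc 2 * L / M L * ‖y L‖ ≤ 2 * L / M L * L := by gcongr; linarith
    _ ≤ 1 / 2 := by rw [div_mul_eq_mul_div, div_le_iff₀ hMpos]; nlinarith

theorem norm_averagedTerm_le_mul (hlam : ‖lam‖ = 1) :
    ‖averagedTerm lam m M K y L‖ ≤ ‖seriesTerm m M y L‖ * K := by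
  rw [averagedTerm, norm_mul]
  gcongr
  exact norm_geom_sum_le_of_norm_eq_one (by rw [norm_pow, hlam, one_pow]) K

theorem norm_averagedTerm_le (hlam : ‖lam‖ = 1)
    (hC1 : M L = ‖lam ^ m L - 1‖ ^ (-1 / (m L : ℝ)) ∧ 4 * (L : ℝ) ^ 2 ≤ M L) (hL : 1 ≤ L)
    (hy : ‖y L‖ ≤ t) :
    ‖averagedTerm lam m M K y L‖ ≤ 2 * (2 * L) ^ m L * t ^ m L := by
  have hM1 := one_lt_of_four_mul_sq_le hL hC1.2
  have hG := norm_geom_sum_le_two_mul_pow (by rw [norm_pow, hlam, one_pow]) hC1.1 hM1 K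
  rw [averagedTerm, norm_mul, norm_seriesTerm (by linarith)]
  have ht : 0 ≤ t := (norm_nonneg _).trans hy
  calc _ ≤ (2 * L / M L) ^ m L * t ^ m L * (2 * M L ^ m L) := by gcongr
    _ = 2 * (2 * L) ^ m L * t ^ m L := by
        rw [div_pow]; field_simp

theorem two_pow_le_norm_averagedTerm
    (hC1 : M L = ‖lam ^ m L - 1‖ ^ (-1 / (m L : ℝ)) ∧ 4 * (L : ℝ) ^ 2 ≤ M L) (hL : 1 ≤ L)
    (hK : 1 ≤ ‖lam ^ (K * m L) - 1‖) (hy : 1 / (L : ℝ) ≤ ‖y L‖) :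
    2 ^ m L ≤ ‖averagedTerm lam m M K y L‖ := by
  have hM1 := one_lt_of_four_mul_sq_le hL hC1.2
  have hG := pow_le_norm_geom_sum hC1.1 hM1 (by rwa [← pow_mul'])
  have hL0 : (L : ℝ) ≠ 0 := by positivity
  rw [averagedTerm, norm_mul, norm_seriesTerm (by linarith)]
  calc (2 : ℝ) ^ m L = (2 * L / M L) ^ m L * (1 / L) ^ m L * M L ^ m L := by
        rw [← mul_pow, ← mul_pow]; congr 1; field_simp
    _ ≤ _ := by gcongr

end Terms

section Series

variable {lam : ℂ} {m r : ℕ → ℕ} {M : ℕ → ℝ} {K : ℕ} {y : ℕ → ℂ} {j : ℕ}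

theorem norm_seriesTerm_add_le_half_pow (hC1 : ∀ L : ℕ, 1 ≤ L → 4 * (L : ℝ) ^ 2 ≤ M L)
    (hC3 : ∀ L, 2 ≤ L → max (m (L - 1)) (r (L - 1)) < min (m L) (r L)) (hj : 1 ≤ j)
    (hy : ∀ L, ‖y L‖ ≤ j) (i : ℕ) :
    ‖seriesTerm m M y (i + j + 1)‖ ≤ (1 / 2) ^ (i + r j) := by
  have hm := add_lt_min_of_max_lt_min hC3 hj i
  refine (norm_seriesTerm_le_half_pow (hC1 _ (by omega)) (t := j) (by positivity)
    (by push_cast; linarith) (hy _)).trans ?_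
  exact pow_le_pow_of_le_one (by norm_num) (by norm_num) (by omega)

theorem summable_norm_seriesTerm (hC1 : ∀ L : ℕ, 1 ≤ L → 4 * (L : ℝ) ^ 2 ≤ M L)
    (hC3 : ∀ L, 2 ≤ L → max (m (L - 1)) (r (L - 1)) < min (m L) (r L)) (hj : 1 ≤ j)
    (hy : ∀ L, ‖y L‖ ≤ j) : Summable fun l => ‖seriesTerm m M y (l + 1)‖ :=
  (summable_nat_add_iff j).1 <| .of_nonneg_of_le (fun _ => norm_nonneg _)
    (norm_seriesTerm_add_le_half_pow hC1 hC3 hj hy)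
    ((summable_nat_add_iff (r j)).2 summable_geometric_two)

theorem norm_tsum_averagedTerm_add_le (hlam : ‖lam‖ = 1)
    (hC1 : ∀ L : ℕ, 1 ≤ L → 4 * (L : ℝ) ^ 2 ≤ M L)
    (hC3 : ∀ L, 2 ≤ L → max (m (L - 1)) (r (L - 1)) < min (m L) (r L))
    (hC5 : (K : ℝ) * ∑' i : ℕ, (1 / 2 : ℝ) ^ (i + r j) < 1) (hj : 1 ≤ j)
    (hy : ∀ L, ‖y L‖ ≤ j) : ‖∑' i, averagedTerm lam m M K y (i + j + 1)‖ ≤ 1 := by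
  refine (norm_tsum_le_mul_tsum_half_pow fun i => ?_).trans hC5.le
  rw [mul_comm]
  exact (norm_averagedTerm_le_mul hlam).trans <| by
    gcongr; exact norm_seriesTerm_add_le_half_pow hC1 hC3 hj hy i

theorem norm_sum_Ico_averagedTerm_le (hlam : ‖lam‖ = 1)
    (hC1 : ∀ L : ℕ, 1 ≤ L →
      M L = ‖lam ^ m L - 1‖ ^ (-1 / (m L : ℝ)) ∧ 4 * (L : ℝ) ^ 2 ≤ M L)
    (hC2 : 1 + j + ∑ L ∈ Ico 1 j, 2 * (2 * (L : ℝ)) ^ m L * (j : ℝ) ^ m L ≤ 2 ^ m j)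
    (hy : ∀ L, ‖y L‖ ≤ j) : ‖∑ L ∈ Ico 1 j, averagedTerm lam m M K y L‖ ≤ 2 ^ m j - 1 - j := by
  have : ‖∑ L ∈ Ico 1 j, averagedTerm lam m M K y L‖ ≤
      ∑ L ∈ Ico 1 j, 2 * (2 * (L : ℝ)) ^ m L * (j : ℝ) ^ m L :=
    (norm_sum_le _ _).trans <| sum_le_sum fun L hL =>
      norm_averagedTerm_le hlam (hC1 L (mem_Ico.1 hL).1) (mem_Ico.1 hL).1 (hy L)
  linarith

end Series

/-- The key estimate: under conditions (C1)–(C5), if `max |x_k| ≤ j` and `|x_{[j]}| ≥ 1/j`,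
then `j ≤ |(L_{kⱼ} a)(x)| ≤ 2(2j²)^{mⱼ} + 2^{mⱼ} − j`, where
`(L_k a)(x) = Σ_{u<k} a(λᵘ x)`. -/
theorem averaging_estimate {n : ℕ} (hn : 0 < n) (lam : ℂ) (hlam : IsCremer lam)
    (m : ℕ → ℕ) (M : ℕ → ℝ) (k : ℕ → ℕ) (r : ℕ → ℕ)
    (hC1 : ∀ j : ℕ, 1 ≤ j →
      M j = ‖lam ^ m j - 1‖ ^ (-(1 : ℝ) / (m j)) ∧ 4 * (j : ℝ) ^ 2 ≤ M j)
    (hC2 : ∀ j : ℕ, 1 ≤ j →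
      (1 : ℝ) + j + ∑ l ∈ Finset.Ico 1 j,
          2 * (2 * (l : ℝ)) ^ m l * (j : ℝ) ^ m l ≤ (2 : ℝ) ^ m j)
    (hC3 : ∀ j : ℕ, 2 ≤ j → max (m (j - 1)) (r (j - 1)) < min (m j) (r j))
    (hC4 : ∀ j : ℕ, 1 ≤ j → 1 ≤ ‖lam ^ (k j * m j) - 1‖)
    (hC5 : ∀ j : ℕ, 1 ≤ j → (k j : ℝ) * ∑' i : ℕ, ((1 : ℝ) / 2) ^ (i + r j) < 1)
    (a : (Fin n → ℂ) → ℂ)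
    (ha : ∀ x, a x = ∑' l : ℕ,
      (((2 * ((l : ℝ) + 1)) / M (l + 1) : ℝ) : ℂ) ^ m (l + 1) *
        x (resIdx n hn (l + 1)) ^ m (l + 1))
    (j : ℕ) (hj : 1 ≤ j) (x : Fin n → ℂ)
    (hxle : ∀ i : Fin n, ‖x i‖ ≤ j)
    (hxge : 1 / (j : ℝ) ≤ ‖x (resIdx n hn j)‖) :
    (j : ℝ) ≤ ‖∑ u ∈ Finset.range (k j), a fun i => lam ^ u * x i‖ ∧
    ‖∑ u ∈ Finset.range (k j), a fun i => lam ^ u * x i‖ ≤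
      2 * (2 * (j : ℝ) ^ 2) ^ m j + 2 ^ m j - j := by
  obtain ⟨hlam1, -, -⟩ := hlam
  set y : ℕ → ℂ := fun L => x (resIdx n hn L)
  set T := averagedTerm lam m M (k j) y
  have hy : ∀ L, ‖y L‖ ≤ j := fun L => hxle _
  have hC1' : ∀ L : ℕ, 1 ≤ L → 4 * (L : ℝ) ^ 2 ≤ M L := fun L hL => (hC1 L hL).2
  have hcSumm := summable_norm_seriesTerm hC1' hC3 hj hy
  have hTSumm : Summable fun l => T (l + 1) :=
    .of_norm_bounded (hcSumm.mul_right _) fun _ => norm_averagedTerm_le_mul hlam1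
  have hswap : ∑ u ∈ range (k j), a (fun i => lam ^ u * x i) = ∑' l, T (l + 1) := by
    refine .trans (sum_congr rfl fun u _ => ?_) (sum_range_tsum_mul_pow_pow hlam1 hcSumm _)
    rw [ha]
    exact tsum_congr fun l => by simp only [seriesTerm, mul_pow]; push_cast; ring
  have hmid : ‖T j‖ ≤ 2 * (2 * (j : ℝ) ^ 2) ^ m j := by
    have := norm_averagedTerm_le hlam1 (hC1 j hj) hj (hy j) (K := k j)
    rwa [mul_assoc, ← mul_pow, mul_assoc, ← sq] at this
  rw [hswap, tsum_nat_succ_eq_sum_Ico_add_add hTSumm hj]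
  have := norm_sum_add_add_bounds (norm_sum_Ico_averagedTerm_le (K := k j) hlam1 hC1 (hC2 j hj) hy)
    (two_pow_le_norm_averagedTerm (hC1 j hj) hj (hC4 j hj) hxge) hmid
    (norm_tsum_averagedTerm_add_le hlam1 hC1' hC3 (hC5 j hj) hj hy)
  constructor <;> linarith
end

section
/- Let λ be a Cremer number, n ≥ 1, and let a(x) = Σ_{j=1}^∞ (2j/Mⱼ)^{mⱼ} x_{[j]}^{mⱼ} where (mⱼ), (Mⱼ), (kⱼ), (rⱼ) satisfy conditions (C1)–(C5). Then the automorphism F(x, y) = (λx, y + a(x)) of ℂ^{n+1} has the finite orbits property in every set of the form ℂⁿ × U with U ⊆ ℂ a bounded open set: for every p ∈ ℂⁿ × U, the set of j ∈ ℤ such that Fᵏ(p) ∈ ℂⁿ × U for all k between 0 and j is finite, or p lies on the fixed-point set {x = 0}. -/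
/-!
Write `F^K (x, y) = (λ^K x, y + S_K(x))` with `S_K(x) = ∑_{t<K} a(λ^t x)`. Summing the geometric
series inside each monomial, the `l`-th monomial of `S_K(x)` is that of `a(x)` multiplied by
`(λ^{K m_l} - 1)/(λ^{m_l} - 1)`, whose modulus is `|λ^{K m_l} - 1| M_l^{m_l}` by (C1).

For `x ≠ 0` choose `j` larger than `diam U`, than every `|x_i|` and than `1/|x_{[j]}|`; this is
possible because `[j]` runs periodically through all coordinates. For `K = k_j`, (C4) makes the
`j`-th term of `S_K(x)` at least `2^{m_j}` in modulus, the earlier terms are bounded by the sum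
in (C2), and (C3), (C5) make the tail smaller than `1`. Hence `|S_K(x)| ≥ j > diam U` and
`F^K (x, y)` leaves `ℂⁿ × U`. Since `|λ^{-s} - 1| = |λ^s - 1|`, the same estimate with `λ⁻¹`
applies to `F^{-K}`.
-/

open Topology Filter

/-- The `j`-th iterate (`j ∈ ℤ`) of an invertible map `F` with inverse `Finv`. -/
def zIter {α : Type*} (F Finv : α → α) (j : ℤ) (p : α) : α :=
  if 0 ≤ j then F^[j.toNat] p else Finv^[(-j).toNat] p

open Finset

theorem norm_sub_sum_range_sub_tsum_le_norm_tsum {E : Type*} [NormedAddCommGroup E]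
    [CompleteSpace E] {G : ℕ → E} (hG : Summable fun l => ‖G l‖) (J : ℕ) :
    ‖G J‖ - ∑ l ∈ range J, ‖G l‖ - ∑' i, ‖G (i + J + 1)‖ ≤ ‖∑' l, G l‖ := by
  have hJ : G J = ∑' l, G l - ∑ l ∈ range J, G l - ∑' i, G (i + J + 1) := by
    rw [← hG.of_norm.sum_add_tsum_nat_add (J + 1), sum_range_succ]
    simp only [← add_assoc]
    abel
  have htail : ‖∑' i, G (i + J + 1)‖ ≤ ∑' i, ‖G (i + J + 1)‖ :=
    norm_tsum_le_tsum_norm ((summable_nat_add_iff (J + 1)).2 hG)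
  have htriangle :
      ‖G J‖ ≤ ‖∑' l, G l‖ + ‖∑ l ∈ range J, G l‖ + ‖∑' i, G (i + J + 1)‖ := by
    rw [hJ]
    exact (norm_sub_le _ _).trans (add_le_add_left (norm_sub_le _ _) _)
  linarith [norm_sum_le (range J) G]

theorem sum_range_tsum_mul_pow {𝕜 : Type*} [NormedField 𝕜] [CompleteSpace 𝕜] {f u : ℕ → 𝕜}
    (hf : Summable fun l => ‖f l‖) (hu : ∀ l, ‖u l‖ ≤ 1) (K : ℕ) :
    ∑ t ∈ range K, ∑' l, f l * u l ^ t = ∑' l, f l * ∑ t ∈ range K, u l ^ t := by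
  have hsum (t : ℕ) : Summable fun l => f l * u l ^ t :=
    hf.of_norm_bounded fun l => by
      rw [norm_mul, norm_pow]
      exact mul_le_of_le_one_right (norm_nonneg _) (pow_le_one₀ (norm_nonneg _) (hu l))
  rw [← Summable.tsum_finsetSum fun t _ => hsum t]
  simp_rw [mul_sum]

theorem norm_geom_sum_le {𝕜 : Type*} [NormedDivisionRing 𝕜] {u : 𝕜} (hu : ‖u‖ ≤ 1) (K : ℕ) :
    ‖∑ t ∈ range K, u ^ t‖ ≤ K :=
  (norm_sum_le _ _).trans <| by
    simpa using sum_le_sum fun t (_ : t ∈ range K) =>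
      (norm_pow u t).trans_le (pow_le_one₀ (norm_nonneg u) hu)

theorem norm_geom_sum_of_norm_sub_one_mul_eq_one {𝕜 : Type*} [NormedDivisionRing 𝕜] {u : 𝕜}
    {c : ℝ} (h : ‖u - 1‖ * c = 1) (K : ℕ) : ‖∑ t ∈ range K, u ^ t‖ = ‖u ^ K - 1‖ * c := by
  have hu : u ≠ 1 := by rintro rfl; simp at h
  rw [geom_sum_eq hu, norm_div, div_eq_mul_inv, ← eq_inv_of_mul_eq_one_right h]

theorem norm_inv_sub_one {𝕜 : Type*} [NormedDivisionRing 𝕜] {z : 𝕜} (hz : ‖z‖ = 1) :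
    ‖z⁻¹ - 1‖ = ‖z - 1‖ := by
  have hz0 : z ≠ 0 := by rintro rfl; simp at hz
  rw [show z⁻¹ - 1 = z⁻¹ * (1 - z) by rw [mul_sub, inv_mul_cancel₀ hz0, mul_one], norm_mul,
    norm_inv, hz, inv_one, one_mul, norm_sub_rev]

theorem mul_rpow_neg_one_div_pow {A : ℝ} (hA : 0 < A) {m : ℕ} (hm : m ≠ 0) :
    A * (A ^ (-1 / m : ℝ)) ^ m = 1 := by
  rw [neg_div, Real.rpow_neg hA.le, inv_pow, one_div, Real.rpow_inv_natCast_pow hA.le hm,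
    mul_inv_cancel₀ hA.ne']

theorem norm_pow_sub_one_mul_rpow_pow_eq_one {lam : ℂ} (hlam : ∀ k : ℕ, 1 ≤ k → lam ^ k ≠ 1)
    {e : ℕ} (he : e ≠ 0) : ‖lam ^ e - 1‖ * (‖lam ^ e - 1‖ ^ (-(1 : ℝ) / e)) ^ e = 1 :=
  mul_rpow_neg_one_div_pow
    (norm_pos_iff.2 (sub_ne_zero.2 (hlam e (Nat.one_le_iff_ne_zero.2 he)))) he

theorem ne_zero_of_one_add_add_le_two_pow {j e : ℕ} {s : ℝ} (hj : 1 ≤ j) (hs : 0 ≤ s)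
    (h : 1 + j + s ≤ (2 : ℝ) ^ e) : e ≠ 0 := by
  rintro rfl
  have : (1 : ℝ) ≤ j := by exact_mod_cast hj
  rw [pow_zero] at h
  linarith

theorem iterate_eq_of_skewProduct {X Y : Type*} [AddCommMonoid Y] {f : X × Y → X × Y} {g : X → X}
    {h : X → Y} (hf : ∀ p, f p = (g p.1, p.2 + h p.1)) (K : ℕ) (p : X × Y) :
    f^[K] p = (g^[K] p.1, p.2 + ∑ t ∈ range K, h (g^[t] p.1)) := by
  induction K with
  | zero => simp
  | succ K ih =>
    rw [Function.iterate_succ_apply', ih, hf, Function.iterate_succ_apply', sum_range_succ,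
      add_assoc]

theorem snd_iterate_eq_add_sum {𝕜 V Y : Type*} [Monoid 𝕜] [MulAction 𝕜 V] [AddCommMonoid Y]
    {c : 𝕜} {b : V → Y} {f : V × Y → V × Y} (hf : ∀ p, f p = (c • p.1, p.2 + b p.1)) (K : ℕ)
    (p : V × Y) : (f^[K] p).2 = p.2 + ∑ t ∈ range K, b (c ^ t • p.1) := by
  simp only [iterate_eq_of_skewProduct (g := (c • ·)) hf, smul_iterate]

theorem snd_iterate_eq_sub_sum {𝕜 V Y : Type*} [Monoid 𝕜] [MulAction 𝕜 V] [AddCommGroup Y]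
    {c : 𝕜} {b : V → Y} {f : V × Y → V × Y} (hf : ∀ p, f p = (c • p.1, p.2 - b (c • p.1)))
    (K : ℕ) (p : V × Y) : (f^[K] p).2 = p.2 - ∑ t ∈ range K, b (c ^ t • c • p.1) := by
  have hcomm (t : ℕ) : c • c ^ t • p.1 = c ^ t • c • p.1 := by
    rw [← mul_smul, ← pow_succ', pow_succ, mul_smul]
  simp only [iterate_eq_of_skewProduct (g := (c • ·)) (h := fun v => -b (c • v))
    (fun p => (hf p).trans (by rw [sub_eq_add_neg])), smul_iterate, hcomm, sum_neg_distrib,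
    sub_eq_add_neg]

theorem add_notMem_of_diam_lt_norm {E : Type*} [SeminormedAddCommGroup E] {U : Set E}
    (hU : Bornology.IsBounded U) {y z : E} (hy : y ∈ U) (hz : Metric.diam U < ‖z‖) :
    y + z ∉ U := fun h =>
  hz.not_ge (by simpa using Metric.dist_le_diam_of_mem hU h hy)

theorem finite_setOf_forall_zIter {α : Type*} {F Finv : α → α} {P : α → Prop} {p : α} {K : ℕ}
    (hF : ¬P (F^[K] p)) (hFinv : ¬P (Finv^[K] p)) :
    {j : ℤ | ∀ i : ℤ, min 0 j ≤ i → i ≤ max 0 j → P (zIter F Finv i p)}.Finite := by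
  refine (Set.finite_Icc (-(K : ℤ)) K).subset fun j hj => ?_
  have hpos : ¬P (zIter F Finv K p) := by simpa [zIter] using hF
  have hneg : ¬P (zIter F Finv (-K) p) := by
    rcases K.eq_zero_or_pos with rfl | hK
    · simpa [zIter] using hF
    · simpa [zIter, hK.ne'] using hFinv
  constructor
  · by_contra h
    exact hneg (hj _ (by omega) (by omega))
  · by_contra h
    exact hpos (hj _ (by omega) (by omega))

theorem resIdx_mul_add_add_one {n : ℕ} (hn : 0 < n) (N : ℕ) (i : Fin n) :
    resIdx n hn (N * n + i + 1) = i := by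
  ext
  simp [resIdx, Nat.mul_comm N n, Nat.mod_eq_of_lt i.isLt]

theorem exists_resIdx_norm_ge {n : ℕ} (hn : 0 < n) {E : Type*} [NormedAddCommGroup E]
    {x : Fin n → E} (hx : x ≠ 0) (R : ℝ) :
    ∃ j : ℕ, 1 ≤ j ∧ R < j ∧ (∀ i, ‖x i‖ ≤ j) ∧ 1 / (j : ℝ) ≤ ‖x (resIdx n hn j)‖ := by
  obtain ⟨i, hi⟩ := Function.ne_iff.1 hx
  have hi : 0 < ‖x i‖ := norm_pos_iff.2 hi
  obtain ⟨N, hN⟩ := exists_nat_gt (max (max R ‖x‖) (1 / ‖x i‖))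
  have hNj : (N : ℝ) ≤ (N * n + i + 1 : ℕ) := by
    exact_mod_cast (Nat.le_mul_of_pos_right N hn).trans (by omega)
  simp only [max_lt_iff] at hN
  refine ⟨N * n + i + 1, by omega, by linarith, fun i' => ?_, ?_⟩
  · linarith [norm_le_pi_norm x i']
  · rw [resIdx_mul_add_add_one, div_le_iff₀ (by positivity)]
    rw [div_lt_iff₀ hi] at hN
    nlinarith

theorem add_lt_of_max_lt_min {m r : ℕ → ℕ}
    (h : ∀ j, 2 ≤ j → max (m (j - 1)) (r (j - 1)) < min (m j) (r j)) {j : ℕ} (hj : 1 ≤ j)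
    (s : ℕ) : r j + s < m (s + j + 1) := by
  suffices r j + s < min (m (s + j + 1)) (r (s + j + 1)) by omega
  induction s with
  | zero =>
    have := h (j + 1) (by omega)
    simp only [Nat.add_sub_cancel, zero_add] at this ⊢
    omega
  | succ s ih =>
    have := h (s + 1 + j + 1) (by omega)
    simp only [show s + 1 + j + 1 - 1 = s + j + 1 by omega] at this
    omega

/-- The monomial `(2l/M_l)^{m_l} x_{[l]}^{m_l}` of `a`, as a function of `w = x_{[l]}`. -/
noncomputable def cremerMonomial (m : ℕ → ℕ) (M : ℕ → ℝ) (l : ℕ) (w : ℂ) : ℂ :=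
  ((2 * l / M l : ℝ) : ℂ) ^ m l * w ^ m l

section CremerMonomial

variable {m : ℕ → ℕ} {M : ℕ → ℝ} {l : ℕ}

theorem norm_cremerMonomial (hM : 0 ≤ M l) (w : ℂ) :
    ‖cremerMonomial m M l w‖ = (2 * l / M l * ‖w‖) ^ m l := by
  rw [cremerMonomial, norm_mul, norm_pow, norm_pow, Complex.norm_real,
    Real.norm_of_nonneg (by positivity), mul_pow]

theorem cremerMonomial_mul (c w : ℂ) :
    cremerMonomial m M l (c * w) = cremerMonomial m M l w * c ^ m l := by
  simp only [cremerMonomial, mul_pow]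
  ring

theorem two_mul_div_mul_le_half (hl : 1 ≤ l) (hM : 4 * (l : ℝ) ^ 2 ≤ M l) {j : ℕ} (hj : j ≤ l) :
    2 * l / M l * j ≤ 1 / 2 := by
  have hl' : (1 : ℝ) ≤ l := by exact_mod_cast hl
  have hj' : (j : ℝ) ≤ l := by exact_mod_cast hj
  rw [div_mul_eq_mul_div, div_le_iff₀ (by nlinarith)]
  nlinarith

theorem norm_cremerMonomial_le_half_pow (hl : 1 ≤ l) (hM : 4 * (l : ℝ) ^ 2 ≤ M l) {j : ℕ}
    (hj : j ≤ l) {w : ℂ} (hw : ‖w‖ ≤ j) : ‖cremerMonomial m M l w‖ ≤ (1 / 2) ^ m l := by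
  have hM0 : 0 ≤ M l := (by positivity : (0 : ℝ) ≤ 4 * (l : ℝ) ^ 2).trans hM
  rw [norm_cremerMonomial hM0]
  exact pow_le_pow_left₀ (by positivity)
    ((mul_le_mul_of_nonneg_left hw (by positivity)).trans (two_mul_div_mul_le_half hl hM hj)) _

theorem summable_norm_cremerMonomial (hM : ∀ l : ℕ, 1 ≤ l → 4 * (l : ℝ) ^ 2 ≤ M l) {j : ℕ}
    (hm : ∀ s, s ≤ m (s + j + 1)) {z : ℕ → ℂ} (hz : ∀ l, ‖z l‖ ≤ j) :
    Summable fun l => ‖cremerMonomial m M (l + 1) (z (l + 1))‖ := by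
  refine (summable_nat_add_iff j).1 <|
    summable_geometric_two.of_nonneg_of_le (fun _ => norm_nonneg _) fun s => ?_
  exact (norm_cremerMonomial_le_half_pow (by omega) (hM _ (by omega)) (by omega) (hz _)).trans
    (pow_le_pow_of_le_one (by norm_num) (by norm_num) (hm s))

variable {ν : ℂ} {K : ℕ}

theorem norm_cremerMonomial_mul_geom_sum_le (hM : ‖ν ^ m l - 1‖ * M l ^ m l = 1)
    (hM0 : 0 < M l) (hν : ‖ν‖ = 1) {j : ℕ} {w : ℂ} (hw : ‖w‖ ≤ j) :
    ‖cremerMonomial m M l w * ∑ t ∈ range K, (ν ^ m l) ^ t‖ ≤ 2 * (2 * l) ^ m l * j ^ m l := by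
  rw [norm_mul, norm_cremerMonomial hM0.le, norm_geom_sum_of_norm_sub_one_mul_eq_one hM]
  have h2 : ‖(ν ^ m l) ^ K - 1‖ ≤ 2 := (norm_sub_le _ _).trans (by norm_num [hν])
  calc (2 * l / M l * ‖w‖) ^ m l * (‖(ν ^ m l) ^ K - 1‖ * M l ^ m l)
      ≤ (2 * l / M l * j) ^ m l * (2 * M l ^ m l) := by gcongr
    _ = 2 * (2 * l) ^ m l * j ^ m l := by
      rw [div_mul_eq_mul_div, div_pow]
      field_simp
      ring

theorem two_pow_le_norm_cremerMonomial_mul_geom_sum (hl : 1 ≤ l)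
    (hM : ‖ν ^ m l - 1‖ * M l ^ m l = 1) (hM0 : 0 < M l) (hK : 1 ≤ ‖ν ^ (K * m l) - 1‖)
    {w : ℂ} (hw : 1 / (l : ℝ) ≤ ‖w‖) :
    2 ^ m l ≤ ‖cremerMonomial m M l w * ∑ t ∈ range K, (ν ^ m l) ^ t‖ := by
  rw [norm_mul, norm_cremerMonomial hM0.le, norm_geom_sum_of_norm_sub_one_mul_eq_one hM,
    ← pow_mul, mul_comm (m l)]
  have hl' : (0 : ℝ) < l := by exact_mod_cast hl
  calc (2 : ℝ) ^ m l = (2 * l / M l * (1 / l)) ^ m l * (1 * M l ^ m l) := by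
        rw [one_mul, ← mul_pow]
        congr 1
        field_simp
    _ ≤ _ := by gcongr

theorem norm_cremerMonomial_mul_geom_sum_le_half_pow (hl : 1 ≤ l) (hM : 4 * (l : ℝ) ^ 2 ≤ M l)
    (hν : ‖ν‖ = 1) {j : ℕ} (hj : j ≤ l) {w : ℂ} (hw : ‖w‖ ≤ j) :
    ‖cremerMonomial m M l w * ∑ t ∈ range K, (ν ^ m l) ^ t‖ ≤ K * (1 / 2) ^ m l := by
  rw [norm_mul, mul_comm (K : ℝ)]
  exact mul_le_mul (norm_cremerMonomial_le_half_pow hl hM hj hw)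
    (norm_geom_sum_le (by simp [hν]) K) (norm_nonneg _) (by positivity)

theorem le_norm_tsum_cremerMonomial_mul_geom_sum (hν : ‖ν‖ = 1)
    (hM : ∀ l, 1 ≤ l → ‖ν ^ m l - 1‖ * M l ^ m l = 1)
    (hM4 : ∀ l : ℕ, 1 ≤ l → 4 * (l : ℝ) ^ 2 ≤ M l) {j r : ℕ} (hj : 1 ≤ j)
    (hC2 : (1 : ℝ) + j + ∑ l ∈ Ico 1 j, 2 * (2 * (l : ℝ)) ^ m l * (j : ℝ) ^ m l ≤ 2 ^ m j)
    (hmr : ∀ s, r + s < m (s + j + 1)) (hC4 : 1 ≤ ‖ν ^ (K * m j) - 1‖)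
    (hC5 : (K : ℝ) * ∑' i : ℕ, ((1 : ℝ) / 2) ^ (i + r) < 1)
    {z : ℕ → ℂ} (hz : ∀ l, ‖z l‖ ≤ j) (hzj : 1 / (j : ℝ) ≤ ‖z j‖) :
    (j : ℝ) ≤ ‖∑' l, cremerMonomial m M (l + 1) (z (l + 1)) *
      ∑ t ∈ range K, (ν ^ m (l + 1)) ^ t‖ := by
  obtain ⟨J, rfl⟩ : ∃ J, j = J + 1 := ⟨j - 1, by omega⟩
  set G : ℕ → ℂ := fun l => cremerMonomial m M l (z l) * ∑ t ∈ range K, (ν ^ m l) ^ t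
  have hM0 (l : ℕ) (hl : 1 ≤ l) : 0 < M l := lt_of_lt_of_le (by positivity) (hM4 l hl)
  have hsum : Summable fun l => ‖G (l + 1)‖ := by
    refine Summable.of_nonneg_of_le (fun _ => norm_nonneg _) (fun l => ?_)
      ((summable_norm_cremerMonomial hM4 (fun s => (hmr s).le.trans' (by omega)) hz).mul_right
        (K : ℝ))
    rw [norm_mul]
    exact mul_le_mul_of_nonneg_left (norm_geom_sum_le (by simp [hν]) K) (norm_nonneg _)
  have hhead : ∑ l ∈ range J, ‖G (l + 1)‖ ≤
      ∑ l ∈ Ico 1 (J + 1), 2 * (2 * (l : ℝ)) ^ m l * ((J + 1 : ℕ) : ℝ) ^ m l := by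
    rw [range_eq_Ico, sum_Ico_add' (fun l => ‖G l‖)]
    exact sum_le_sum fun l hl =>
      norm_cremerMonomial_mul_geom_sum_le (hM l (mem_Ico.1 hl).1) (hM0 l (mem_Ico.1 hl).1) hν
        (hz l)
  have hgeom : Summable fun i : ℕ => ((1 : ℝ) / 2) ^ (i + r) := by
    simpa [pow_add] using summable_geometric_two.mul_right (((1 : ℝ) / 2) ^ r)
  have htail : ∑' i, ‖G (i + J + 1 + 1)‖ ≤ K * ∑' i : ℕ, ((1 : ℝ) / 2) ^ (i + r) := by
    rw [← tsum_mul_left]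
    refine Summable.tsum_le_tsum (fun i => ?_) ((summable_nat_add_iff (J + 1)).2 hsum)
      (hgeom.mul_left (K : ℝ))
    refine (norm_cremerMonomial_mul_geom_sum_le_half_pow (by omega) (hM4 _ (by omega)) hν
      (by omega) (hz _)).trans (mul_le_mul_of_nonneg_left ?_ (by positivity))
    have := hmr i
    simp only [← add_assoc] at this
    exact pow_le_pow_of_le_one (by norm_num) (by norm_num) (by omega)
  have hdom : (2 : ℝ) ^ m (J + 1) ≤ ‖G (J + 1)‖ :=
    two_pow_le_norm_cremerMonomial_mul_geom_sum hj (hM _ hj) (hM0 _ hj) hC4 hzj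
  have := norm_sub_sum_range_sub_tsum_le_norm_tsum hsum J
  linarith

theorem le_norm_sum_range_apply_smul {n : ℕ} (hn : 0 < n) {a : (Fin n → ℂ) → ℂ}
    (ha : ∀ x, a x = ∑' l : ℕ, (((2 * ((l : ℝ) + 1)) / M (l + 1) : ℝ) : ℂ) ^ m (l + 1) *
      x (resIdx n hn (l + 1)) ^ m (l + 1))
    (hν : ‖ν‖ = 1) (hM : ∀ l, 1 ≤ l → ‖ν ^ m l - 1‖ * M l ^ m l = 1)
    (hM4 : ∀ l : ℕ, 1 ≤ l → 4 * (l : ℝ) ^ 2 ≤ M l) {j r : ℕ} (hj : 1 ≤ j)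
    (hC2 : (1 : ℝ) + j + ∑ l ∈ Ico 1 j, 2 * (2 * (l : ℝ)) ^ m l * (j : ℝ) ^ m l ≤ 2 ^ m j)
    (hmr : ∀ s, r + s < m (s + j + 1)) (hC4 : 1 ≤ ‖ν ^ (K * m j) - 1‖)
    (hC5 : (K : ℝ) * ∑' i : ℕ, ((1 : ℝ) / 2) ^ (i + r) < 1)
    {x : Fin n → ℂ} (hx : ∀ i, ‖x i‖ ≤ j) (hxj : 1 / (j : ℝ) ≤ ‖x (resIdx n hn j)‖) :
    (j : ℝ) ≤ ‖∑ t ∈ range K, a (ν ^ t • x)‖ := by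
  have hterm (t : ℕ) : a (ν ^ t • x) =
      ∑' l, cremerMonomial m M (l + 1) (x (resIdx n hn (l + 1))) * (ν ^ m (l + 1)) ^ t := by
    rw [ha]
    refine tsum_congr fun l => ?_
    rw [pow_right_comm, ← cremerMonomial_mul, cremerMonomial, Pi.smul_apply, smul_eq_mul]
    push_cast
    rfl
  have hsum := summable_norm_cremerMonomial hM4 (fun s => (hmr s).le.trans' (by omega))
    (z := fun l => x (resIdx n hn l)) fun _ => hx _
  rw [sum_congr rfl fun t _ => hterm t, sum_range_tsum_mul_pow hsum (fun _ => by simp [hν])]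
  exact le_norm_tsum_cremerMonomial_mul_geom_sum (z := fun l => x (resIdx n hn l)) hν hM hM4 hj
    hC2 hmr hC4 hC5 (fun _ => hx _) hxj

end CremerMonomial

/-- The automorphism `F(x,y) = (λx, y + a(x))`, for `λ` a Cremer number and `a` the series
built from sequences satisfying (C1)–(C5), has the finite orbits property in every set
`ℂⁿ × U` with `U ⊆ ℂ` bounded and open: every point of `ℂⁿ × U` either lies on the fixed
point set `{x = 0}` or has a finite orbit in `ℂⁿ × U`. -/
theorem cremer_automorphism_finite_orbits {n : ℕ} (hn : 0 < n) (lam : ℂ)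
    (hlam : IsCremer lam)
    (m : ℕ → ℕ) (M : ℕ → ℝ) (k : ℕ → ℕ) (r : ℕ → ℕ)
    (hC1 : ∀ j : ℕ, 1 ≤ j →
      M j = ‖lam ^ m j - 1‖ ^ (-(1 : ℝ) / (m j)) ∧ 4 * (j : ℝ) ^ 2 ≤ M j)
    (hC2 : ∀ j : ℕ, 1 ≤ j →
      (1 : ℝ) + j + ∑ l ∈ Finset.Ico 1 j,
          2 * (2 * (l : ℝ)) ^ m l * (j : ℝ) ^ m l ≤ (2 : ℝ) ^ m j)
    (hC3 : ∀ j : ℕ, 2 ≤ j → max (m (j - 1)) (r (j - 1)) < min (m j) (r j))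
    (hC4 : ∀ j : ℕ, 1 ≤ j → 1 ≤ ‖lam ^ (k j * m j) - 1‖)
    (hC5 : ∀ j : ℕ, 1 ≤ j → (k j : ℝ) * ∑' i : ℕ, ((1 : ℝ) / 2) ^ (i + r j) < 1)
    (a : (Fin n → ℂ) → ℂ)
    (ha : ∀ x, a x = ∑' l : ℕ,
      (((2 * ((l : ℝ) + 1)) / M (l + 1) : ℝ) : ℂ) ^ m (l + 1) *
        x (resIdx n hn (l + 1)) ^ m (l + 1))
    (F Finv : (Fin n → ℂ) × ℂ → (Fin n → ℂ) × ℂ)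
    (hF : ∀ p, F p = (fun i => lam * p.1 i, p.2 + a p.1))
    (hFinv : ∀ p, Finv p = (fun i => lam⁻¹ * p.1 i, p.2 - a fun i => lam⁻¹ * p.1 i)) :
    ∀ U : Set ℂ, IsOpen U → Bornology.IsBounded U →
      ∀ p : (Fin n → ℂ) × ℂ, p.2 ∈ U →
        p.1 = 0 ∨
        {j : ℤ | ∀ i : ℤ, min 0 j ≤ i → i ≤ max 0 j →
          (zIter F Finv i p).2 ∈ U}.Finite := by
  obtain ⟨hlam, hlam_root, -⟩ := hlam
  have hMlam (l : ℕ) (hl : 1 ≤ l) : ‖lam ^ m l - 1‖ * M l ^ m l = 1 := by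
    rw [(hC1 l hl).1]
    exact norm_pow_sub_one_mul_rpow_pow_eq_one hlam_root
      (ne_zero_of_one_add_add_le_two_pow hl (by positivity) (hC2 l hl))
  intro U _ hU ⟨x, y⟩ hy
  rcases eq_or_ne x 0 with hx | hx
  · exact Or.inl hx
  obtain ⟨j, hj, hjU, hxj, hxJ⟩ := exists_resIdx_norm_ge hn hx (Metric.diam U)
  have hescape (ν : ℂ) (hν : ‖ν‖ = 1) (hνlam : ∀ e, ‖ν ^ e - 1‖ = ‖lam ^ e - 1‖)
      (x' : Fin n → ℂ) (hx' : ∀ i, ‖x' i‖ = ‖x i‖) :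
      Metric.diam U < ‖∑ t ∈ range (k j), a (ν ^ t • x')‖ :=
    hjU.trans_le <| le_norm_sum_range_apply_smul hn ha hν
      (fun l hl => by rw [hνlam]; exact hMlam l hl) (fun l hl => (hC1 l hl).2) hj (hC2 j hj)
      (add_lt_of_max_lt_min hC3 hj) (by rw [hνlam]; exact hC4 j hj) (hC5 j hj)
      (fun i => (hx' i).trans_le (hxj i)) (hxJ.trans_eq (hx' _).symm)
  have hfwd : (F^[k j] (x, y)).2 ∉ U := by
    rw [snd_iterate_eq_add_sum (c := lam) hF]
    exact add_notMem_of_diam_lt_norm hU hy (hescape lam hlam (fun _ => rfl) x fun _ => rfl)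
  have hbwd : (Finv^[k j] (x, y)).2 ∉ U := by
    rw [snd_iterate_eq_sub_sum (c := lam⁻¹) hFinv, sub_eq_add_neg]
    refine add_notMem_of_diam_lt_norm hU hy ((hescape lam⁻¹ (by simp [hlam]) (fun e => ?_) _
      fun i => by simp [hlam]).trans_eq (norm_neg _).symm)
    rw [inv_pow, norm_inv_sub_one (by rw [norm_pow, hlam, one_pow])]
  exact Or.inr (finite_setOf_forall_zIter (P := fun q : (Fin n → ℂ) × ℂ => q.2 ∈ U) hfwd hbwd)
end

section
/- Let V, W be two distinct nontrivial germs of analytic subsets of (ℂ², 0) (i.e. V ≠ {0} ≠ W and V ≠ W as germs), and let ψ ∈ Diff(ℂ²,0) satisfy V ∪ W ⊆ Fix(ψ). Then ψ is tangent to the identity, i.e. D₀ψ = id. -/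
open Topology Filter

/-- `V` is (the germ at `0` of) an analytic subset of `(ℂ², 0)`: near `0` it is the common
zero locus of finitely many holomorphic functions. -/
def IsAnalyticGermAtZero (V : Set (ℂ × ℂ)) : Prop :=
  ∃ U ∈ 𝓝 (0 : ℂ × ℂ), ∃ (N : ℕ) (f : Fin N → ℂ × ℂ → ℂ),
    (∀ i, ∀ x ∈ U, AnalyticAt ℂ (f i) x) ∧ V ∩ U = {x ∈ U | ∀ i, f i x = 0}

/-!
If `D₀ψ ≠ id`, some linear form `ℓ` makes `h = ℓ ∘ (ψ - id)` a submersion at `0`, so by the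
analytic inverse function theorem the zero set of `h` is, near `0`, an analytic arc through `0`.
Both `V` and `W` lie in it. An analytic germ accumulating at `0` inside an analytic arc contains
the whole arc: each of its defining functions, restricted to the arc, vanishes at parameters
accumulating at `0`, hence identically by the identity theorem. So `V` and `W` both coincide with
`{h = 0}` near `0`, contradicting `V ≠ W`.
-/

theorem exists_comp_ne_zero {𝕜 E F : Type*} [NontriviallyNormedField 𝕜] [NormedAddCommGroup E]
    [NormedSpace 𝕜 E] [NormedAddCommGroup F] [NormedSpace 𝕜 F] [SeparatingDual 𝕜 F]
    {B : E →L[𝕜] F} (hB : B ≠ 0) : ∃ ℓ : F →L[𝕜] 𝕜, ℓ ∘L B ≠ 0 := by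
  obtain ⟨w, hw⟩ := DFunLike.ne_iff.mp hB
  obtain ⟨ℓ, hℓ⟩ := SeparatingDual.exists_ne_zero (R := 𝕜) hw
  exact ⟨ℓ, fun h => hℓ (by simpa using DFunLike.congr_fun h w)⟩

theorem exists_prod_eq_continuousLinearEquiv {𝕜 : Type*} [NontriviallyNormedField 𝕜]
    [CompleteSpace 𝕜] {φ : 𝕜 × 𝕜 →L[𝕜] 𝕜} (hφ : φ ≠ 0) :
    ∃ (L : 𝕜 × 𝕜 →L[𝕜] 𝕜) (e : (𝕜 × 𝕜) ≃L[𝕜] 𝕜 × 𝕜), (e : 𝕜 × 𝕜 →L[𝕜] 𝕜 × 𝕜) = φ.prod L := by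
  suffices ∃ L : 𝕜 × 𝕜 →L[𝕜] 𝕜, Function.Injective (φ.prod L) by
    obtain ⟨L, hL⟩ := this
    exact ⟨L, (LinearEquiv.ofInjectiveEndo (φ.prod L : 𝕜 × 𝕜 →ₗ[𝕜] 𝕜 × 𝕜) hL)
      |>.toContinuousLinearEquiv, rfl⟩
  have hφz (z : 𝕜 × 𝕜) : φ z = z.1 * φ (1, 0) + z.2 * φ (0, 1) := by
    rw [show z = z.1 • ((1 : 𝕜), (0 : 𝕜)) + z.2 • ((0 : 𝕜), (1 : 𝕜)) by ext <;> simp,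
      map_add, map_smul, map_smul]
    simp
  by_cases ha : φ (1, 0) = 0
  · have hb : φ (0, 1) ≠ 0 := fun hb => hφ <| ContinuousLinearMap.ext fun z => by
      rw [hφz, ha, hb]
      simp
    refine ⟨ContinuousLinearMap.fst 𝕜 𝕜 𝕜, (injective_iff_map_eq_zero _).mpr fun z hz => ?_⟩
    obtain ⟨hφ0, h1⟩ : φ z = 0 ∧ z.1 = 0 := Prod.mk_eq_zero.mp hz
    rw [hφz, ha, h1] at hφ0
    exact Prod.ext h1 (by simpa [hb] using hφ0)
  · refine ⟨ContinuousLinearMap.snd 𝕜 𝕜 𝕜, (injective_iff_map_eq_zero _).mpr fun z hz => ?_⟩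
    obtain ⟨hφ0, h2⟩ : φ z = 0 ∧ z.2 = 0 := Prod.mk_eq_zero.mp hz
    rw [hφz, h2] at hφ0
    exact Prod.ext (by simpa [ha] using hφ0) h2

section AnalyticArc

variable {𝕜 : Type*} [NontriviallyNormedField 𝕜] {E : Type*} [NormedAddCommGroup E]
  [NormedSpace 𝕜 E]

structure IsLocallyOnAnalyticArc (Z : Set E) (γ : 𝕜 → E) (τ : E → 𝕜) : Prop where
  analyticAt : AnalyticAt 𝕜 γ 0
  map_zero : γ 0 = 0
  tendsto : Tendsto τ (𝓝 0) (𝓝 0)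
  eventually_eq : ∀ᶠ z in 𝓝 0, z ∈ Z → γ (τ z) = z

theorem IsLocallyOnAnalyticArc.eventually_eq_zero_of_frequently {F : Type*}
    [NormedAddCommGroup F] [NormedSpace 𝕜 F] {Z : Set E} {γ : 𝕜 → E} {τ : E → 𝕜}
    (hZ : IsLocallyOnAnalyticArc Z γ τ) {f : E → F} (hf : AnalyticAt 𝕜 f 0)
    (hfreq : ∃ᶠ z in 𝓝[≠] 0, z ∈ Z ∧ f z = 0) :
    ∀ᶠ z in 𝓝 0, z ∈ Z → f z = 0 := by
  have hfγ : AnalyticAt 𝕜 (f ∘ γ) 0 := (hZ.map_zero ▸ hf).comp hZ.analyticAt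
  -- `τ z ≠ 0` because `γ (τ z) = z ≠ 0 = γ 0`.
  have hparam : ∃ᶠ z in 𝓝[≠] 0, τ z ≠ 0 ∧ f (γ (τ z)) = 0 := by
    refine (hfreq.and_eventually ((hZ.eventually_eq.filter_mono nhdsWithin_le_nhds).and
      self_mem_nhdsWithin)).mono ?_
    rintro z ⟨⟨hzZ, hfz⟩, hγτ, hz0⟩
    refine ⟨fun hτz => hz0 ?_, by rw [hγτ hzZ, hfz]⟩
    rw [← hγτ hzZ, hτz, hZ.map_zero]
    rfl
  have hfγ_freq : ∃ᶠ t in 𝓝[≠] 0, (f ∘ γ) t = 0 :=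
    frequently_nhdsWithin_iff.mpr <|
      (hZ.tendsto.mono_left nhdsWithin_le_nhds).frequently (hparam.mono fun _ h => ⟨h.2, h.1⟩)
  filter_upwards [hZ.eventually_eq,
    hZ.tendsto.eventually (hfγ.frequently_zero_iff_eventually_zero.mp hfγ_freq)] with z hz hfz hzZ
  rw [← hz hzZ]
  exact hfz

theorem exists_isLocallyOnAnalyticArc_setOf_eq_zero [CompleteSpace E] {h : E → 𝕜}
    (hh : AnalyticAt 𝕜 h 0) (h0 : h 0 = 0) {L : E →L[𝕜] 𝕜} {e : E ≃L[𝕜] 𝕜 × 𝕜}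
    (he : (e : E →L[𝕜] 𝕜 × 𝕜) = (fderiv 𝕜 h 0).prod L) :
    ∃ γ, IsLocallyOnAnalyticArc {z | h z = 0} γ L := by
  have hΦ : HasStrictFDerivAt (fun z => (h z, L z)) (e : E →L[𝕜] 𝕜 × 𝕜) 0 :=
    he ▸ hh.hasStrictFDerivAt.prodMk L.hasStrictFDerivAt
  set Φ := hΦ.toOpenPartialHomeomorph
  have hΦ0 : Φ 0 = 0 := by simp [Φ, h0]
  have h0src : (0 : E) ∈ Φ.source := hΦ.mem_toOpenPartialHomeomorph_source
  have hsymm : AnalyticAt 𝕜 Φ.symm 0 :=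
    hΦ0 ▸ Φ.analyticAt_symm' h0src (hh.prod (L.analyticAt 0)) hΦ.hasFDerivAt.fderiv
  refine ⟨fun t => Φ.symm (0, t), ⟨?_, ?_, L.continuous.tendsto' 0 0 L.map_zero, ?_⟩⟩
  · exact hsymm.comp_of_eq (analyticAt_const.prod analyticAt_id) Prod.mk_zero_zero
  · show Φ.symm (0, 0) = 0
    rw [Prod.mk_zero_zero, ← hΦ0]
    exact Φ.left_inv h0src
  · filter_upwards [Φ.open_source.mem_nhds h0src] with z hz hhz
    simpa [Φ, hhz] using Φ.left_inv hz

end AnalyticArc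

theorem IsAnalyticGermAtZero.eventually_mem_iff {X Z : Set (ℂ × ℂ)} {γ : ℂ → ℂ × ℂ}
    {τ : ℂ × ℂ → ℂ} (hX : IsAnalyticGermAtZero X) (hXacc : AccPt 0 (𝓟 X))
    (hXZ : ∀ᶠ z in 𝓝 0, z ∈ X → z ∈ Z) (hZ : IsLocallyOnAnalyticArc Z γ τ) :
    ∀ᶠ z in 𝓝 0, z ∈ X ↔ z ∈ Z := by
  obtain ⟨U, hU, N, f, hf, hXU⟩ := hX
  have hmem {z} (hz : z ∈ U) : z ∈ X ↔ ∀ i, f i z = 0 := by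
    simpa [hz] using Set.ext_iff.mp hXU z
  have hvanish (i : Fin N) : ∀ᶠ z in 𝓝 0, z ∈ Z → f i z = 0 :=
    hZ.eventually_eq_zero_of_frequently (hf i 0 (mem_of_mem_nhds hU)) <|
      (accPt_iff_frequently_nhdsNE.mp hXacc |>.and_eventually
        ((hXZ.and hU).filter_mono nhdsWithin_le_nhds)).mono
          fun _ ⟨hzX, hzZ, hzU⟩ => ⟨hzZ hzX, (hmem hzU).mp hzX i⟩
  filter_upwards [hXZ, hU, eventually_all.mpr hvanish] with z hzZ hzU hzf
  exact ⟨hzZ, fun hz => (hmem hzU).mpr fun i => hzf i hz⟩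

theorem tangent_to_identity_of_two_fixed_curves_general (psi : ℂ × ℂ → ℂ × ℂ)
    (hpsi : AnalyticAt ℂ psi 0) (hpsi0 : psi 0 = 0)
    (V W : Set (ℂ × ℂ))
    (hVan : IsAnalyticGermAtZero V) (hWan : IsAnalyticGermAtZero W)
    (hVnt : ∀ U ∈ 𝓝 (0 : ℂ × ℂ), ∃ x ∈ V ∩ U, x ≠ 0)
    (hWnt : ∀ U ∈ 𝓝 (0 : ℂ × ℂ), ∃ x ∈ W ∩ U, x ≠ 0)
    (hVW : ¬ ∀ᶠ x in 𝓝 (0 : ℂ × ℂ), x ∈ V ↔ x ∈ W)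
    (hfix : ∀ᶠ x in 𝓝 (0 : ℂ × ℂ), x ∈ V ∪ W → psi x = x) :
    fderiv ℂ psi 0 = ContinuousLinearMap.id ℂ (ℂ × ℂ) := by
  by_contra hne
  obtain ⟨ℓ, hℓ⟩ := exists_comp_ne_zero (sub_ne_zero.mpr hne)
  set h : ℂ × ℂ → ℂ := fun z => ℓ (psi z - z)
  have hh : AnalyticAt ℂ h 0 := (ℓ.analyticAt _).comp (hpsi.sub analyticAt_id)
  have hDh : fderiv ℂ h 0 = ℓ ∘L (fderiv ℂ psi 0 - ContinuousLinearMap.id ℂ (ℂ × ℂ)) :=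
    (ℓ.hasFDerivAt.comp 0 (hpsi.differentiableAt.hasFDerivAt.sub (hasFDerivAt_id 0))).fderiv
  obtain ⟨L, e, he⟩ := exists_prod_eq_continuousLinearEquiv (hDh ▸ hℓ)
  obtain ⟨γ, hγ⟩ := exists_isLocallyOnAnalyticArc_setOf_eq_zero hh (by simp [h, hpsi0]) he
  have hfixed {X : Set (ℂ × ℂ)} (hX : X ⊆ V ∪ W) : ∀ᶠ z in 𝓝 0, z ∈ X → z ∈ {z | h z = 0} :=
    hfix.mono fun z hz hzX => by simp [h, hz (hX hzX)]
  have hacc {X : Set (ℂ × ℂ)} (hX : ∀ U ∈ 𝓝 (0 : ℂ × ℂ), ∃ x ∈ X ∩ U, x ≠ 0) :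
      AccPt 0 (𝓟 X) :=
    accPt_iff_nhds.mpr fun U hU => by simpa only [Set.inter_comm] using hX U hU
  have hV := hVan.eventually_mem_iff (hacc hVnt) (hfixed Set.subset_union_left) hγ
  have hW := hWan.eventually_mem_iff (hacc hWnt) (hfixed Set.subset_union_right) hγ
  exact hVW ((hV.and hW).mono fun z hz => hz.1.trans hz.2.symm)

/-- If `V` and `W` are two distinct nontrivial germs of analytic subsets of `(ℂ², 0)` and
`ψ ∈ Diff(ℂ²,0)` fixes `V ∪ W` pointwise, then `ψ` is tangent to the identity. -/
theorem tangent_to_identity_of_two_fixed_curves (psi : ℂ × ℂ → ℂ × ℂ)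
    (hpsi : AnalyticAt ℂ psi 0) (hpsi0 : psi 0 = 0)
    (hinj : ∃ U ∈ 𝓝 (0 : ℂ × ℂ), Set.InjOn psi U)
    (V W : Set (ℂ × ℂ)) (h0V : (0 : ℂ × ℂ) ∈ V) (h0W : (0 : ℂ × ℂ) ∈ W)
    (hVan : IsAnalyticGermAtZero V) (hWan : IsAnalyticGermAtZero W)
    (hVnt : ∀ U ∈ 𝓝 (0 : ℂ × ℂ), ∃ x ∈ V ∩ U, x ≠ 0)
    (hWnt : ∀ U ∈ 𝓝 (0 : ℂ × ℂ), ∃ x ∈ W ∩ U, x ≠ 0)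
    (hVW : ¬ ∀ᶠ x in 𝓝 (0 : ℂ × ℂ), x ∈ V ↔ x ∈ W)
    (hfix : ∀ᶠ x in 𝓝 (0 : ℂ × ℂ), x ∈ V ∪ W → psi x = x) :
    fderiv ℂ psi 0 = ContinuousLinearMap.id ℂ (ℂ × ℂ) :=
  tangent_to_identity_of_two_fixed_curves_general psi hpsi hpsi0 V W hVan hWan hVnt hWnt hVW hfix
end
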